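/- arXiv:1103.5921 — 9 statements merged into one kernel-verified Lean document; each statement's English description precedes it below -/
import Mathlib

section
/- Let θ, φ : [0,1] → ℝ be continuously differentiable, with θ not identically zero and with the zero set of φ consisting of at most isolated points of [0,1]. If the function C_{θ,φ}(u,v) = u·v + θ(max(u,v))·φ(u)·φ(v) is a copula on [0,1]², then: (a) φ(0) = 0; (b) φ(1)·θ(1) = 0; (c) φ'(u)·(θ·φ)'(v) ≥ −1 for all 0 < u ≤ v < 1; and (d) θ'(u) ≤ 0 for all u ∈ (0,1). -/
/-!
(a) and (b) come from the boundary conditions. If `φ(0) ≠ 0`, then `C(0,v) = 0` forces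
`θ φ ≡ 0`, impossible near a point where `θ ≠ 0`, since `θ` is continuous and the zeros of `φ`
are isolated. Likewise `C(u,1) = u` forces `θ(1) φ(1) φ ≡ 0`, while `φ` does not vanish near
its isolated zero `0`.

(c) and (d) come from 2-increasingness on small rectangles. On `[x,u] × [v,y]` with
`u ≤ v` the `max` always picks the second coordinate, so the `C`-volume is
`(u-x)(y-v) + (φ u - φ x)((θφ) y - (θφ) v)`; dividing by `(u-x)(y-v)` and letting the
rectangle shrink gives (c). On the square `[x,y]²` the volume is
`(y-x)² + θ(y)(φ y - φ x)² - (θ y - θ x) φ(x)²`; dividing by `y - x` and letting `y ↓ x`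
gives `θ'(x) φ(x)² ≤ 0`, which yields (d) away from the isolated zeros of `φ`, and then
everywhere by continuity of `θ'`.
-/

/-- A bivariate copula on `[0,1]²`, given as a function `ℝ → ℝ → ℝ`. -/
def IsCopula (C : ℝ → ℝ → ℝ) : Prop :=
  (∀ u ∈ Set.Icc (0:ℝ) 1, C u 0 = 0 ∧ C 0 u = 0) ∧
  (∀ u ∈ Set.Icc (0:ℝ) 1, C u 1 = u ∧ C 1 u = u) ∧
  (∀ u₁ u₂ v₁ v₂ : ℝ, 0 ≤ u₁ → u₁ ≤ u₂ → u₂ ≤ 1 → 0 ≤ v₁ → v₁ ≤ v₂ → v₂ ≤ 1 →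
    C u₂ v₂ - C u₂ v₁ - C u₁ v₂ + C u₁ v₁ ≥ 0)

open Filter Topology Set

def perturbedProduct (θ φ : ℝ → ℝ) (u v : ℝ) : ℝ := u * v + θ (max u v) * φ u * φ v

lemma hasDerivAt_derivWithin_Icc {f : ℝ → ℝ} {a b u : ℝ}
    (hf : DifferentiableOn ℝ f (Icc a b)) (hu : u ∈ Ioo a b) :
    HasDerivAt f (derivWithin f (Icc a b) u) u :=
  (hf u (Ioo_subset_Icc_self hu)).hasDerivWithinAt.hasDerivAt (Icc_mem_nhds hu.1 hu.2)

lemma exists_mem_Icc_ne_zero_of_isolated {φ : ℝ → ℝ} {p : ℝ → Prop} {a b u : ℝ}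
    (hab : a < b) (hu : u ∈ Icc a b)
    (hiso : ∃ ε > 0, ∀ x ∈ Icc a b, x ≠ u → |x - u| < ε → φ x ≠ 0)
    (hp : ∀ᶠ x in 𝓝[Icc a b] u, p x) :
    ∃ x ∈ Icc a b, φ x ≠ 0 ∧ p x := by
  obtain ⟨ε, hε, hφ⟩ := hiso
  have : (𝓝[Icc a b \ {u}] u).NeBot := by
    -- in dimension one, unique differentiability means being an accumulation point
    rw [← accPt_principal_iff_nhdsWithin, ← uniqueDiffWithinAt_iff_accPt]
    exact uniqueDiffOn_Icc hab u hu
  have hball : ∀ᶠ x in 𝓝[Icc a b \ {u}] u, |x - u| < ε := by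
    filter_upwards [nhdsWithin_le_nhds (Metric.ball_mem_nhds u hε)] with x hx
    rwa [Metric.mem_ball, Real.dist_eq] at hx
  have hmem : ∀ᶠ x in 𝓝[Icc a b \ {u}] u, x ∈ Icc a b \ {u} := self_mem_nhdsWithin
  obtain ⟨x, ⟨hxI, hxu⟩, hxε, hpx⟩ :=
    (hmem.and (hball.and (nhdsWithin_mono _ sdiff_subset hp))).exists
  exact ⟨x, hxI, hφ x hxI hxu hxε, hpx⟩

section PerturbedProduct

variable {θ φ : ℝ → ℝ}

lemma perturbedProduct_volume_of_le {u₁ u₂ v₁ v₂ : ℝ} (hu : u₁ ≤ u₂) (huv : u₂ ≤ v₁)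
    (hv : v₁ ≤ v₂) :
    perturbedProduct θ φ u₂ v₂ - perturbedProduct θ φ u₂ v₁ - perturbedProduct θ φ u₁ v₂
      + perturbedProduct θ φ u₁ v₁
      = (u₂ - u₁) * (v₂ - v₁) + (φ u₂ - φ u₁) * (θ v₂ * φ v₂ - θ v₁ * φ v₁) := by
  simp only [perturbedProduct, max_eq_right (huv.trans hv), max_eq_right huv,
    max_eq_right ((hu.trans huv).trans hv), max_eq_right (hu.trans huv)]
  ring

lemma perturbedProduct_volume_square {x y : ℝ} (hxy : x ≤ y) :
    perturbedProduct θ φ y y - perturbedProduct θ φ y x - perturbedProduct θ φ x y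
      + perturbedProduct θ φ x x
      = (y - x) ^ 2 + θ y * (φ y - φ x) ^ 2 - (θ y - θ x) * φ x ^ 2 := by
  simp only [perturbedProduct, max_self, max_eq_left hxy, max_eq_right hxy]
  ring

lemma IsCopula.phi_zero (hC : IsCopula (perturbedProduct θ φ))
    (hθ : ContinuousOn θ (Icc 0 1)) (hθne : ∃ u ∈ Icc (0:ℝ) 1, θ u ≠ 0)
    (hφiso : ∀ u ∈ Icc (0:ℝ) 1, φ u = 0 →
      ∃ ε > 0, ∀ x ∈ Icc (0:ℝ) 1, x ≠ u → |x - u| < ε → φ x ≠ 0) :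
    φ 0 = 0 := by
  by_contra h0
  have hθφ : ∀ v ∈ Icc (0:ℝ) 1, θ v * φ v = 0 := fun v hv => by
    have h := (hC.1 v hv).2
    simp only [perturbedProduct, zero_mul, zero_add, max_eq_right hv.1] at h
    simpa [h0, mul_right_comm] using h
  obtain ⟨u₀, hu₀, hθu₀⟩ := hθne
  have hφu₀ : φ u₀ = 0 := (mul_eq_zero.mp (hθφ u₀ hu₀)).resolve_left hθu₀
  obtain ⟨x, hx, hφx, hθx⟩ := exists_mem_Icc_ne_zero_of_isolated zero_lt_one hu₀
    (hφiso u₀ hu₀ hφu₀) ((hθ u₀ hu₀).eventually_ne hθu₀)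
  exact mul_ne_zero hθx hφx (hθφ x hx)

lemma IsCopula.phi_one_mul_theta_one (hC : IsCopula (perturbedProduct θ φ))
    (hφiso : ∀ u ∈ Icc (0:ℝ) 1, φ u = 0 →
      ∃ ε > 0, ∀ x ∈ Icc (0:ℝ) 1, x ≠ u → |x - u| < ε → φ x ≠ 0)
    (hφ0 : φ 0 = 0) :
    φ 1 * θ 1 = 0 := by
  have h0 : (0:ℝ) ∈ Icc 0 1 := left_mem_Icc.mpr zero_le_one
  obtain ⟨x, hx, hφx, -⟩ := exists_mem_Icc_ne_zero_of_isolated (p := fun _ => True)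
    zero_lt_one h0 (hφiso 0 h0 hφ0) (Eventually.of_forall fun _ => trivial)
  have h := (hC.2.1 x hx).1
  simp only [perturbedProduct, mul_one, max_eq_right hx.2, add_eq_left] at h
  exact (mul_eq_zero.mp (by linear_combination h : φ x * (φ 1 * θ 1) = 0)).resolve_left hφx

lemma IsCopula.neg_one_le_slope_mul_slope (hC : IsCopula (perturbedProduct θ φ))
    {x u v y : ℝ} (hx : 0 ≤ x) (hxu : x < u) (huv : u ≤ v) (hvy : v < y) (hy : y ≤ 1) :
    -1 ≤ slope φ u x * slope (fun t => θ t * φ t) v y := by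
  have hvol := hC.2.2 x u v y hx hxu.le (huv.trans_lt (hvy.trans_le hy)).le
    ((hx.trans hxu.le).trans huv) hvy.le hy
  rw [ge_iff_le, perturbedProduct_volume_of_le hxu.le huv hvy.le] at hvol
  rw [slope_comm, slope_def_field, slope_def_field, div_mul_div_comm,
    le_div_iff₀ (mul_pos (sub_pos.mpr hxu) (sub_pos.mpr hvy))]
  linarith

lemma IsCopula.neg_one_le_deriv_mul_deriv (hC : IsCopula (perturbedProduct θ φ))
    {u v a b : ℝ} (hu : 0 < u) (huv : u ≤ v) (hv : v < 1)
    (ha : HasDerivAt φ a u) (hb : HasDerivAt (fun t => θ t * φ t) b v) :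
    -1 ≤ a * b := by
  have hlim : Tendsto (fun p : ℝ × ℝ => slope φ u p.1 * slope (fun t => θ t * φ t) v p.2)
      (𝓝[<] u ×ˢ 𝓝[>] v) (𝓝 (a * b)) :=
    ((hasDerivAt_iff_tendsto_slope_left_right.mp ha).1.comp tendsto_fst).mul
      ((hasDerivAt_iff_tendsto_slope_left_right.mp hb).2.comp tendsto_snd)
  refine ge_of_tendsto hlim ?_
  filter_upwards [prod_mem_prod (Ioo_mem_nhdsLT hu) (Ioo_mem_nhdsGT hv)] with ⟨x, y⟩ ⟨hx, hy⟩
  exact hC.neg_one_le_slope_mul_slope hx.1.le hx.2 huv hy.1 hy.2.le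

lemma IsCopula.slope_mul_sq_le (hC : IsCopula (perturbedProduct θ φ))
    {x y : ℝ} (hx : 0 ≤ x) (hxy : x < y) (hy : y ≤ 1) :
    slope θ x y * φ x ^ 2 ≤ (y - x) * (1 + θ y * slope φ x y ^ 2) := by
  have hvol := hC.2.2 x y x y hx hxy.le hy hx hxy.le hy
  rw [ge_iff_le, perturbedProduct_volume_square hxy.le] at hvol
  have hyx : 0 < y - x := sub_pos.mpr hxy
  rw [slope_def_field, slope_def_field, div_mul_eq_mul_div, div_le_iff₀ hyx, div_pow]
  field_simp
  linarith

lemma IsCopula.deriv_mul_sq_nonpos (hC : IsCopula (perturbedProduct θ φ))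
    {u c a : ℝ} (hu0 : 0 ≤ u) (hu1 : u < 1) (hc : HasDerivAt θ c u) (ha : HasDerivAt φ a u) :
    c * φ u ^ 2 ≤ 0 := by
  have hsub : Tendsto (fun y => y - u) (𝓝[>] u) (𝓝 0) := by
    simpa using (tendsto_id.sub_const u).mono_left (nhdsWithin_le_nhds (a := u))
  have hθy : Tendsto θ (𝓝[>] u) (𝓝 (θ u)) := hc.continuousAt.tendsto.mono_left nhdsWithin_le_nhds
  have hR : Tendsto (fun y => (y - u) * (1 + θ y * slope φ u y ^ 2)) (𝓝[>] u)
      (𝓝 (0 * (1 + θ u * a ^ 2))) :=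
    hsub.mul (tendsto_const_nhds.add
      (hθy.mul ((hasDerivAt_iff_tendsto_slope_left_right.mp ha).2.pow 2)))
  have hL : Tendsto (fun y => slope θ u y * φ u ^ 2) (𝓝[>] u) (𝓝 (c * φ u ^ 2)) :=
    (hasDerivAt_iff_tendsto_slope_left_right.mp hc).2.mul_const _
  rw [zero_mul] at hR
  refine le_of_tendsto_of_tendsto hL hR ?_
  filter_upwards [Ioo_mem_nhdsGT hu1] with y hy
  exact hC.slope_mul_sq_le hu0 hy.1 hy.2.le

lemma IsCopula.derivWithin_theta_nonpos (hC : IsCopula (perturbedProduct θ φ))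
    (hθ : ContDiffOn ℝ 1 θ (Icc 0 1)) (hφ : DifferentiableOn ℝ φ (Icc 0 1))
    (hφiso : ∀ u ∈ Icc (0:ℝ) 1, φ u = 0 →
      ∃ ε > 0, ∀ x ∈ Icc (0:ℝ) 1, x ≠ u → |x - u| < ε → φ x ≠ 0)
    {u : ℝ} (hu : u ∈ Ioo 0 1) :
    derivWithin θ (Icc 0 1) u ≤ 0 := by
  have hnonpos : ∀ x ∈ Ioo (0:ℝ) 1, derivWithin θ (Icc 0 1) x * φ x ^ 2 ≤ 0 := fun x hx =>
    hC.deriv_mul_sq_nonpos hx.1.le hx.2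
      (hasDerivAt_derivWithin_Icc (hθ.differentiableOn one_ne_zero) hx)
      (hasDerivAt_derivWithin_Icc hφ hx)
  by_contra! hpos
  have hφu : φ u = 0 := by
    by_contra hφu
    exact (mul_pos hpos (pow_two_pos_of_ne_zero hφu)).not_ge (hnonpos u hu)
  have hcont : ContinuousWithinAt (derivWithin θ (Icc 0 1)) (Icc 0 1) u :=
    hθ.continuousOn_derivWithin uniqueDiffOn_Icc_zero_one le_rfl u (Ioo_subset_Icc_self hu)
  have hIoo : ∀ᶠ x in 𝓝[Icc 0 1] u, x ∈ Ioo (0:ℝ) 1 :=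
    mem_nhdsWithin_of_mem_nhds (Ioo_mem_nhds hu.1 hu.2)
  obtain ⟨x, -, hφx, hxI, hθx⟩ := exists_mem_Icc_ne_zero_of_isolated zero_lt_one
    (Ioo_subset_Icc_self hu) (hφiso u (Ioo_subset_Icc_self hu) hφu)
    (hIoo.and (hcont.eventually (eventually_gt_nhds hpos)))
  exact (mul_pos hθx (pow_two_pos_of_ne_zero hφx)).not_ge (hnonpos x hxI)

end PerturbedProduct

theorem stmt0 (θ φ : ℝ → ℝ)
    (hθ : ContDiffOn ℝ 1 θ (Set.Icc 0 1))
    (hφ : ContDiffOn ℝ 1 φ (Set.Icc 0 1))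
    (hθne : ∃ u ∈ Set.Icc (0:ℝ) 1, θ u ≠ 0)
    (hφiso : ∀ u ∈ Set.Icc (0:ℝ) 1, φ u = 0 →
      ∃ ε > 0, ∀ x ∈ Set.Icc (0:ℝ) 1, x ≠ u → |x - u| < ε → φ x ≠ 0)
    (hC : IsCopula (fun u v => u * v + θ (max u v) * φ u * φ v)) :
    φ 0 = 0 ∧
    φ 1 * θ 1 = 0 ∧
    (∀ u v : ℝ, 0 < u → u ≤ v → v < 1 →
      derivWithin φ (Set.Icc 0 1) u *
        derivWithin (fun x => θ x * φ x) (Set.Icc 0 1) v ≥ -1) ∧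
    (∀ u ∈ Set.Ioo (0:ℝ) 1, derivWithin θ (Set.Icc 0 1) u ≤ 0) := by
  have hC' : IsCopula (perturbedProduct θ φ) := hC
  have hDθ : DifferentiableOn ℝ θ (Icc 0 1) := hθ.differentiableOn one_ne_zero
  have hDφ : DifferentiableOn ℝ φ (Icc 0 1) := hφ.differentiableOn one_ne_zero
  have hφ0 : φ 0 = 0 := hC'.phi_zero hθ.continuousOn hθne hφiso
  refine ⟨hφ0, hC'.phi_one_mul_theta_one hφiso hφ0, fun u v hu huv hv => ?_,
    fun u hu => ?_⟩
  · exact hC'.neg_one_le_deriv_mul_deriv hu huv hv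
      (hasDerivAt_derivWithin_Icc hDφ ⟨hu, huv.trans_lt hv⟩)
      (hasDerivAt_derivWithin_Icc (hDθ.mul hDφ) ⟨hu.trans_le huv, hv⟩)
  · exact hC'.derivWithin_theta_nonpos hθ hDφ hφiso hu
end

section
/- Let θ, φ : [0,1] → ℝ be continuously differentiable and suppose (a) φ(0) = 0; (b) φ(1)·θ(1) = 0; (c) φ'(u)·(θ·φ)'(v) ≥ −1 for all 0 < u ≤ v < 1; and (d) θ'(u) ≤ 0 for all u ∈ (0,1). Then the function C_{θ,φ}(u,v) = u·v + θ(max(u,v))·φ(u)·φ(v) is a copula on [0,1]², i.e. it satisfies (P1), (P2) and (P3). -/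
/-!
Write `ψ = θ φ`. By symmetry of `C`, every rectangle splits into rectangles `[a,b] × [c,d]`
lying on one side of the diagonal (`b ≤ c`) and squares `[a,b]²` on it. Off the diagonal the
`C`-volume is `(b-a)(d-c) + (φ b - φ a)(ψ d - ψ c)`, and the mean value theorem turns the second
term into `φ'(s) ψ'(t) (b-a)(d-c)` with `s < t`, so (c) bounds it below by `-(b-a)(d-c)`.
On the diagonal the volume `G(b) = (b-a)² + θ(b)(φ b - φ a)² + (θ a - θ b) φ(a)²` vanishes at
`b = a` and `G'(t) = 2(t-a)(1 + φ'(s) ψ'(t)) - θ'(t) φ(t)²` for some `s < t`, which is `≥ 0`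
by (c) and (d).
-/

open Set Topology

def rectVolume (C : ℝ → ℝ → ℝ) (u₁ u₂ v₁ v₂ : ℝ) : ℝ :=
  C u₂ v₂ - C u₂ v₁ - C u₁ v₂ + C u₁ v₁

section RectVolume

variable {C : ℝ → ℝ → ℝ}

theorem rectVolume_add_left (u₁ u₂ u₃ v₁ v₂ : ℝ) :
    rectVolume C u₁ u₂ v₁ v₂ + rectVolume C u₂ u₃ v₁ v₂ = rectVolume C u₁ u₃ v₁ v₂ := by
  unfold rectVolume; ring

theorem rectVolume_add_right (u₁ u₂ v₁ v₂ v₃ : ℝ) :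
    rectVolume C u₁ u₂ v₁ v₂ + rectVolume C u₁ u₂ v₂ v₃ = rectVolume C u₁ u₂ v₁ v₃ := by
  unfold rectVolume; ring

theorem rectVolume_comm (hC : ∀ u v, C u v = C v u) (u₁ u₂ v₁ v₂ : ℝ) :
    rectVolume C u₁ u₂ v₁ v₂ = rectVolume C v₁ v₂ u₁ u₂ := by
  unfold rectVolume; rw [hC u₂ v₂, hC u₂ v₁, hC u₁ v₂, hC u₁ v₁]; ring

theorem rectVolume_nonneg_of_symm {s : Set ℝ} (hC : ∀ u v, C u v = C v u)
    (hoff : ∀ a ∈ s, ∀ b ∈ s, ∀ c ∈ s, ∀ d ∈ s, a ≤ b → b ≤ c → c ≤ d →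
      0 ≤ rectVolume C a b c d)
    (hdiag : ∀ a ∈ s, ∀ b ∈ s, a ≤ b → 0 ≤ rectVolume C a b a b)
    {u₁ u₂ v₁ v₂ : ℝ} (hu₁ : u₁ ∈ s) (hu₂ : u₂ ∈ s) (hv₁ : v₁ ∈ s) (hv₂ : v₂ ∈ s)
    (hu : u₁ ≤ u₂) (hv : v₁ ≤ v₂) : 0 ≤ rectVolume C u₁ u₂ v₁ v₂ := by
  have corner : ∀ a ∈ s, ∀ b ∈ s, ∀ d ∈ s, a ≤ b → a ≤ d → 0 ≤ rectVolume C a b a d := by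
    intro a ha b hb d hd hab had
    rcases le_total b d with hbd | hdb
    · rw [← rectVolume_add_right a b a b d]
      exact add_nonneg (hdiag a ha b hb hab) (hoff a ha b hb b hb d hd hab le_rfl hbd)
    · rw [← rectVolume_add_left a d b a d, rectVolume_comm hC d b]
      exact add_nonneg (hdiag a ha d hd had) (hoff a ha d hd d hd b hb had le_rfl hdb)
  have below : ∀ u₁ ∈ s, ∀ u₂ ∈ s, ∀ v₁ ∈ s, ∀ v₂ ∈ s, u₁ ≤ u₂ → v₁ ≤ v₂ → u₁ ≤ v₁ →
      0 ≤ rectVolume C u₁ u₂ v₁ v₂ := by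
    intro u₁ hu₁ u₂ hu₂ v₁ hv₁ v₂ hv₂ hu hv huv
    rcases le_total u₂ v₁ with h | h
    · exact hoff u₁ hu₁ u₂ hu₂ v₁ hv₁ v₂ hv₂ hu h hv
    · rw [← rectVolume_add_left u₁ v₁ u₂]
      exact add_nonneg (hoff u₁ hu₁ v₁ hv₁ v₁ hv₁ v₂ hv₂ huv le_rfl hv)
        (corner v₁ hv₁ u₂ hu₂ v₂ hv₂ h hv)
  rcases le_total u₁ v₁ with h | h
  · exact below u₁ hu₁ u₂ hu₂ v₁ hv₁ v₂ hv₂ hu hv h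
  · rw [rectVolume_comm hC]
    exact below v₁ hv₁ v₂ hv₂ u₁ hu₁ u₂ hu₂ hv hu h

end RectVolume

section MeanValue

variable {f : ℝ → ℝ} {p q : ℝ}

theorem DifferentiableOn.hasDerivAt_derivWithin {s : Set ℝ} (hf : DifferentiableOn ℝ f s)
    {x : ℝ} (hx : s ∈ 𝓝 x) : HasDerivAt f (derivWithin f s x) x :=
  (hf x (mem_of_mem_nhds hx)).hasDerivWithinAt.hasDerivAt hx

theorem DifferentiableOn.exists_sub_eq_derivWithin_Icc_mul (hf : DifferentiableOn ℝ f (Icc p q))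
    {a b : ℝ} (hpa : p ≤ a) (hab : a < b) (hbq : b ≤ q) :
    ∃ c ∈ Ioo a b, f b - f a = derivWithin f (Icc p q) c * (b - a) := by
  obtain ⟨c, hc, h⟩ := exists_hasDerivAt_eq_slope f (derivWithin f (Icc p q)) hab
    (hf.continuousOn.mono (Icc_subset_Icc hpa hbq)) fun x hx =>
      hf.hasDerivAt_derivWithin (Icc_mem_nhds (hpa.trans_lt hx.1) (hx.2.trans_le hbq))
  refine ⟨c, hc, ?_⟩
  rw [h, div_mul_cancel₀ _ (sub_ne_zero.2 hab.ne')]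

end MeanValue

theorem add_mul_sub_mul_sub_nonneg {f g : ℝ → ℝ} (hf : DifferentiableOn ℝ f (Icc 0 1))
    (hg : DifferentiableOn ℝ g (Icc 0 1))
    (hfg : ∀ u v : ℝ, 0 < u → u ≤ v → v < 1 →
      derivWithin f (Icc 0 1) u * derivWithin g (Icc 0 1) v ≥ -1)
    {a b c d : ℝ} (ha : 0 ≤ a) (hab : a ≤ b) (hbc : b ≤ c) (hcd : c ≤ d) (hd : d ≤ 1) :
    0 ≤ (b - a) * (d - c) + (f b - f a) * (g d - g c) := by
  rcases hab.eq_or_lt with rfl | hab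
  · simp
  rcases hcd.eq_or_lt with rfl | hcd
  · simp
  obtain ⟨s, hs, hfs⟩ := hf.exists_sub_eq_derivWithin_Icc_mul ha hab
    (hbc.trans (hcd.le.trans hd))
  obtain ⟨t, ht, hgt⟩ := hg.exists_sub_eq_derivWithin_Icc_mul
    (ha.trans (hab.le.trans hbc)) hcd hd
  have key := hfg s t (ha.trans_lt hs.1) ((hs.2.trans_le hbc).le.trans ht.1.le) (ht.2.trans_le hd)
  rw [hfs, hgt]
  calc 0 ≤ (b - a) * (d - c) * (1 + derivWithin f (Icc 0 1) s * derivWithin g (Icc 0 1) t) :=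
        mul_nonneg (mul_nonneg (sub_nonneg.2 hab.le) (sub_nonneg.2 hcd.le))
          (neg_le_iff_add_nonneg'.1 key)
    _ = _ := by ring

section ThetaPhi

variable {θ φ : ℝ → ℝ}

def thetaPhi (θ φ : ℝ → ℝ) (u v : ℝ) : ℝ := u * v + θ (max u v) * φ u * φ v

theorem thetaPhi_comm (u v : ℝ) : thetaPhi θ φ u v = thetaPhi θ φ v u := by
  unfold thetaPhi; rw [max_comm]; ring

theorem rectVolume_thetaPhi_of_le {a b c d : ℝ} (hab : a ≤ b) (hbc : b ≤ c) (hcd : c ≤ d) :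
    rectVolume (thetaPhi θ φ) a b c d
      = (b - a) * (d - c) + (φ b - φ a) * (θ d * φ d - θ c * φ c) := by
  simp only [rectVolume, thetaPhi, max_eq_right (hbc.trans hcd), max_eq_right hbc,
    max_eq_right (hab.trans (hbc.trans hcd)), max_eq_right (hab.trans hbc)]
  ring

theorem rectVolume_thetaPhi_diag {a b : ℝ} (hab : a ≤ b) :
    rectVolume (thetaPhi θ φ) a b a b
      = (b - a) ^ 2 + θ b * (φ b - φ a) ^ 2 + (θ a - θ b) * φ a ^ 2 := by
  simp only [rectVolume, thetaPhi, max_self, max_eq_left hab, max_eq_right hab]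
  ring

theorem hasDerivAt_sq_add_mul_sq_add_mul_sq (a : ℝ) {t θ' φ' : ℝ} (hθ : HasDerivAt θ θ' t)
    (hφ : HasDerivAt φ φ' t) :
    HasDerivAt (fun t => (t - a) ^ 2 + θ t * (φ t - φ a) ^ 2 + (θ a - θ t) * φ a ^ 2)
      (2 * (t - a) + 2 * (φ t - φ a) * (θ' * φ t + θ t * φ') - θ' * φ t ^ 2) t := by
  refine (((((hasDerivAt_id' t).sub_const a).fun_pow 2).fun_add
    (hθ.fun_mul ((hφ.sub_const (φ a)).fun_pow 2))).fun_add
      ((hθ.const_sub (θ a)).mul_const (φ a ^ 2))).congr_deriv ?_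
  push_cast
  ring

theorem sq_add_mul_sq_add_mul_sq_nonneg (hθ : DifferentiableOn ℝ θ (Icc 0 1))
    (hφ : DifferentiableOn ℝ φ (Icc 0 1))
    (hc : ∀ u v : ℝ, 0 < u → u ≤ v → v < 1 →
      derivWithin φ (Icc 0 1) u * derivWithin (fun x => θ x * φ x) (Icc 0 1) v ≥ -1)
    (hd : ∀ u ∈ Ioo (0:ℝ) 1, derivWithin θ (Icc 0 1) u ≤ 0)
    {a b : ℝ} (ha : 0 ≤ a) (hab : a ≤ b) (hb : b ≤ 1) :
    0 ≤ (b - a) ^ 2 + θ b * (φ b - φ a) ^ 2 + (θ a - θ b) * φ a ^ 2 := by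
  rcases hab.eq_or_lt with rfl | hab
  · simp
  set θ' := derivWithin θ (Icc 0 1)
  set φ' := derivWithin φ (Icc 0 1)
  set G : ℝ → ℝ := fun t => (t - a) ^ 2 + θ t * (φ t - φ a) ^ 2 + (θ a - θ t) * φ a ^ 2
  set G' : ℝ → ℝ := fun t =>
    2 * (t - a) + 2 * (φ t - φ a) * (θ' t * φ t + θ t * φ' t) - θ' t * φ t ^ 2
  have hIoo : ∀ t ∈ Ioo a b, t ∈ Ioo (0:ℝ) 1 := fun t ht =>
    ⟨ha.trans_lt ht.1, ht.2.trans_le hb⟩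
  have hG : ∀ t ∈ Ioo a b, HasDerivAt G (G' t) t := fun t ht =>
    have ht₀₁ := Icc_mem_nhds (hIoo t ht).1 (hIoo t ht).2
    hasDerivAt_sq_add_mul_sq_add_mul_sq a (hθ.hasDerivAt_derivWithin ht₀₁)
      (hφ.hasDerivAt_derivWithin ht₀₁)
  have hGc : ContinuousOn G (Icc a b) := by
    have hθc := hθ.continuousOn.mono (Icc_subset_Icc ha hb)
    have hφc := hφ.continuousOn.mono (Icc_subset_Icc ha hb)
    fun_prop
  obtain ⟨t, ht, hGt⟩ := exists_hasDerivAt_eq_slope G G' hab hGc hG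
  have hG't : 0 ≤ G' t := by
    obtain ⟨s, hs, hφs⟩ := hφ.exists_sub_eq_derivWithin_Icc_mul ha ht.1 (ht.2.le.trans hb)
    have hψt : derivWithin (fun x => θ x * φ x) (Icc 0 1) t = θ' t * φ t + θ t * φ' t :=
      derivWithin_fun_mul (hθ t (Ioo_subset_Icc_self (hIoo t ht)))
        (hφ t (Ioo_subset_Icc_self (hIoo t ht)))
    have hcst := hc s t (ha.trans_lt hs.1) hs.2.le (hIoo t ht).2
    rw [hψt] at hcst
    calc 0 ≤ 2 * (t - a) * (1 + φ' s * (θ' t * φ t + θ t * φ' t)) + (-θ' t) * φ t ^ 2 := by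
          refine add_nonneg (mul_nonneg ?_ (neg_le_iff_add_nonneg'.1 hcst))
            (mul_nonneg (neg_nonneg.2 (hd t (hIoo t ht))) (sq_nonneg _))
          linarith [ht.1]
      _ = G' t := by simp only [G', hφs]; ring
  have hGa : G a = 0 := by simp [G]
  have hGb : G b = G' t * (b - a) := by
    rw [hGt, hGa, sub_zero, div_mul_cancel₀ _ (sub_ne_zero.2 hab.ne')]
  change 0 ≤ G b
  rw [hGb]
  exact mul_nonneg hG't (sub_nonneg.2 hab.le)

end ThetaPhi

theorem stmt1 (θ φ : ℝ → ℝ)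
    (hθ : ContDiffOn ℝ 1 θ (Set.Icc 0 1))
    (hφ : ContDiffOn ℝ 1 φ (Set.Icc 0 1))
    (ha : φ 0 = 0)
    (hb : φ 1 * θ 1 = 0)
    (hc : ∀ u v : ℝ, 0 < u → u ≤ v → v < 1 →
      derivWithin φ (Set.Icc 0 1) u *
        derivWithin (fun x => θ x * φ x) (Set.Icc 0 1) v ≥ -1)
    (hd : ∀ u ∈ Set.Ioo (0:ℝ) 1, derivWithin θ (Set.Icc 0 1) u ≤ 0) :
    IsCopula (fun u v => u * v + θ (max u v) * φ u * φ v) := by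
  change IsCopula (thetaPhi θ φ)
  have hθ' := hθ.differentiableOn one_ne_zero
  have hφ' := hφ.differentiableOn one_ne_zero
  refine ⟨fun u _ => ⟨by simp [thetaPhi, ha], by simp [thetaPhi, ha]⟩,
    fun u hu => ⟨?_, ?_⟩, ?_⟩
  · simp only [thetaPhi, max_eq_right hu.2]
    linear_combination φ u * hb
  · simp only [thetaPhi, max_eq_left hu.2]
    linear_combination φ u * hb
  intro u₁ u₂ v₁ v₂ hu₁ hu hu₂ hv₁ hv hv₂
  refine rectVolume_nonneg_of_symm (s := Icc 0 1) thetaPhi_comm ?_ ?_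
    ⟨hu₁, hu.trans hu₂⟩ ⟨hu₁.trans hu, hu₂⟩ ⟨hv₁, hv.trans hv₂⟩ ⟨hv₁.trans hv, hv₂⟩ hu hv
  · intro a ha b _ c _ d hd hab hbc hcd
    rw [rectVolume_thetaPhi_of_le hab hbc hcd]
    exact add_mul_sub_mul_sub_nonneg hφ' (hθ'.mul hφ') hc ha.1 hab hbc hcd hd.2
  · intro a ha b hb hab
    rw [rectVolume_thetaPhi_diag hab]
    exact sq_add_mul_sq_add_mul_sq_nonneg hθ' hφ' hc hd ha.1 hab hb.2
end

section
/- Let θ, φ : [0,1] → ℝ be continuously differentiable with φ(0) = 0. Then for every (u,v) ∈ [0,1]², the iterated integral ∫₀ᵘ ∫₀ᵛ [1 + (θ·φ)'(max(s,t))·φ'(min(s,t))] dt ds equals C_{θ,φ}(u,v) + ∫₀^{min(u,v)} θ'(t)·φ(t)² dt, where C_{θ,φ}(u,v) = u·v + θ(max(u,v))·φ(u)·φ(v). (Consequently the absolutely continuous component of the copula C_{θ,φ} is A_{θ,φ}(u,v) = C_{θ,φ}(u,v) + ∫₀^{min(u,v)} θ'(t)φ(t)² dt and its singular component is S_{θ,φ}(u,v)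 = −∫₀^{min(u,v)} θ'(t)φ(t)² dt.) -/
/-!
Off the diagonal the density `1 + (θφ)'(max s t) φ'(min s t)` splits into a function of `s` times
a function of `t`, so cutting the inner integral at `t = s` and the outer one at `s = v` reduces
everything to the fundamental theorem of calculus. Below the diagonal the two boundary terms
`(θφ)'(s) φ(s)` and `-φ'(s) (θφ)(s)` combine, by the product rule, into `θ'(s) φ(s)²`; this
is the source of the extra integral over `[0, min u v]`.
-/

open Set MeasureTheory intervalIntegral

section
variable {E : Type*} [NormedAddCommGroup E] [NormedSpace ℝ E]

theorem intervalIntegral.integral_eq_add_of_eqOn_Ioo {f f₁ f₂ : ℝ → E} {a b c : ℝ}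
    (hac : a ≤ c) (hcb : c ≤ b) (h₁ : EqOn f f₁ (Ioo a c)) (h₂ : EqOn f f₂ (Ioo c b))
    (hi₁ : IntervalIntegrable f₁ volume a c) (hi₂ : IntervalIntegrable f₂ volume c b) :
    ∫ x in a..b, f x = (∫ x in a..c, f₁ x) + ∫ x in c..b, f₂ x := by
  rw [← uIoo_of_le hac] at h₁
  rw [← uIoo_of_le hcb] at h₂
  rw [← integral_add_adjacent_intervals (hi₁.congr_uIoo h₁.symm) (hi₂.congr_uIoo h₂.symm),
    integral_congr_uIoo h₁, integral_congr_uIoo h₂]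

theorem intervalIntegral.integral_max_min_eq_add {K : ℝ → ℝ → E} {a b c : ℝ}
    (hab : a ≤ b) (hac : a ≤ c)
    (h₁ : IntervalIntegrable (fun t => K c t) volume a (min c b))
    (h₂ : IntervalIntegrable (fun t => K t c) volume (min c b) b) :
    ∫ t in a..b, K (max c t) (min c t) =
      (∫ t in a..min c b, K c t) + ∫ t in min c b..b, K t c := by
  refine integral_eq_add_of_eqOn_Ioo (le_min hac hab) (min_le_right c b) ?_ ?_ h₁ h₂
  · intro t ht
    have htc : t ≤ c := (ht.2.trans_le (min_le_left c b)).le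
    simp only [max_eq_left htc, min_eq_right htc]
  · intro t ht
    have hct : c ≤ t := ((min_lt_iff.mp ht.1).resolve_right ht.2.not_gt).le
    simp only [max_eq_right hct, min_eq_left hct]

theorem intervalIntegral.integral_derivWithin_Icc_eq_sub_of_mem [CompleteSpace E] {f : ℝ → E}
    {a b x y : ℝ}
    (hf : ContDiffOn ℝ 1 f (Icc a b)) (hx : x ∈ Icc a b) (hy : y ∈ Icc a b) :
    ∫ t in x..y, derivWithin f (Icc a b) t = f y - f x := by
  rw [← integral_derivWithin_uIcc_of_contDiffOn_uIcc (hf.mono (uIcc_subset_Icc hx hy))]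
  refine integral_congr_uIoo fun t ht => ?_
  have hab : Icc a b ∈ nhds t := Icc_mem_nhds ((le_inf hx.1 hy.1).trans_lt ht.1)
    (ht.2.trans_le (sup_le hx.2 hy.2))
  have hxy : uIcc x y ∈ nhds t := Icc_mem_nhds ht.1 ht.2
  rw [derivWithin_of_mem_nhds hab, derivWithin_of_mem_nhds hxy]

end

theorem intervalIntegral.integral_const_add_mul_derivWithin {f : ℝ → ℝ} {a b x y : ℝ}
    (hf : ContDiffOn ℝ 1 f (Icc a b)) (hx : x ∈ Icc a b) (hy : y ∈ Icc a b) (c d : ℝ) :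
    ∫ t in x..y, (c + d * derivWithin f (Icc a b) t) = c * (y - x) + d * (f y - f x) := by
  rcases eq_or_ne x y with rfl | hxy
  · simp
  have hab : a < b :=
    ((le_inf hx.1 hy.1).trans_lt (inf_lt_sup.mpr hxy)).trans_le (sup_le hx.2 hy.2)
  have hf' : IntervalIntegrable (derivWithin f (Icc a b)) volume x y :=
    ((hf.continuousOn_derivWithin (uniqueDiffOn_Icc hab) le_rfl).mono
      (uIcc_subset_Icc hx hy)).intervalIntegrable
  rw [integral_add intervalIntegrable_const (hf'.const_mul d), integral_const,
    integral_const_mul, integral_derivWithin_Icc_eq_sub_of_mem hf hx hy, smul_eq_mul, mul_comm]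

theorem integral_one_add_derivWithin_max_mul_derivWithin_min {f g : ℝ → ℝ}
    (hf : ContDiffOn ℝ 1 f (Icc 0 1)) (hg : ContDiffOn ℝ 1 g (Icc 0 1)) (hf0 : f 0 = 0)
    {s v : ℝ} (hs : s ∈ Icc (0:ℝ) 1) (hv : v ∈ Icc (0:ℝ) 1) :
    ∫ t in (0:ℝ)..v,
        (1 + derivWithin g (Icc 0 1) (max s t) * derivWithin f (Icc 0 1) (min s t)) =
      v + derivWithin g (Icc 0 1) s * f (min s v) +
        derivWithin f (Icc 0 1) s * (g v - g (min s v)) := by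
  have h0 : (0:ℝ) ∈ Icc 0 1 := left_mem_Icc.2 zero_le_one
  have hm : min s v ∈ Icc (0:ℝ) 1 := ⟨le_min hs.1 hv.1, (min_le_left s v).trans hs.2⟩
  have hF := hf.continuousOn_derivWithin (uniqueDiffOn_Icc zero_lt_one) le_rfl
  have hG := hg.continuousOn_derivWithin (uniqueDiffOn_Icc zero_lt_one) le_rfl
  refine (integral_max_min_eq_add (K := fun x y =>
      1 + derivWithin g (Icc 0 1) x * derivWithin f (Icc 0 1) y) hv.1 hs.1
    ((continuousOn_const.add (continuousOn_const.mul hF)).mono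
      (uIcc_subset_Icc h0 hm)).intervalIntegrable
    ((continuousOn_const.add (hG.mul continuousOn_const)).mono
      (uIcc_subset_Icc hm hv)).intervalIntegrable).trans ?_
  simp only [mul_comm (derivWithin g (Icc 0 1) _) (derivWithin f (Icc 0 1) s)]
  rw [integral_const_add_mul_derivWithin hf h0 hm, integral_const_add_mul_derivWithin hg hm hv, hf0]
  ring

theorem integral_const_add_derivWithin_mul_comp_min {f g : ℝ → ℝ}
    (hf : ContDiffOn ℝ 1 f (Icc 0 1)) (hg : ContDiffOn ℝ 1 g (Icc 0 1)) (hf0 : f 0 = 0)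
    {u v : ℝ} (hu : u ∈ Icc (0:ℝ) 1) (hv : v ∈ Icc (0:ℝ) 1) :
    ∫ s in (0:ℝ)..u, (v + derivWithin g (Icc 0 1) s * f (min s v) +
        derivWithin f (Icc 0 1) s * (g v - g (min s v))) =
      u * v + (∫ s in (0:ℝ)..min u v,
          (derivWithin g (Icc 0 1) s * f s - derivWithin f (Icc 0 1) s * g s)) +
        g v * f (min u v) + f v * (g u - g (min u v)) := by
  have h0 : (0:ℝ) ∈ Icc 0 1 := left_mem_Icc.2 zero_le_one
  have hm : min u v ∈ Icc (0:ℝ) 1 := ⟨le_min hu.1 hv.1, (min_le_left u v).trans hu.2⟩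
  have hF := hf.continuousOn_derivWithin (uniqueDiffOn_Icc zero_lt_one) le_rfl
  have hG := hg.continuousOn_derivWithin (uniqueDiffOn_Icc zero_lt_one) le_rfl
  have hdiag : IntervalIntegrable (fun s =>
      derivWithin g (Icc 0 1) s * f s - derivWithin f (Icc 0 1) s * g s) volume 0 (min u v) :=
    (((hG.mul hf.continuousOn).sub (hF.mul hg.continuousOn)).mono
      (uIcc_subset_Icc h0 hm)).intervalIntegrable
  have hlin : IntervalIntegrable (fun s => v + g v * derivWithin f (Icc 0 1) s)
      volume 0 (min u v) :=
    ((continuousOn_const.add (continuousOn_const.mul hF)).mono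
      (uIcc_subset_Icc h0 hm)).intervalIntegrable
  rw [integral_eq_add_of_eqOn_Ioo
      (f₁ := fun s => (v + g v * derivWithin f (Icc 0 1) s) +
        (derivWithin g (Icc 0 1) s * f s - derivWithin f (Icc 0 1) s * g s))
      (f₂ := fun s => v + f v * derivWithin g (Icc 0 1) s)
      hm.1 (min_le_left u v) ?below ?above (hlin.add hdiag)
      ((continuousOn_const.add (continuousOn_const.mul hG)).mono
        (uIcc_subset_Icc hm hu)).intervalIntegrable,
    integral_add hlin hdiag, integral_const_add_mul_derivWithin hf h0 hm,
    integral_const_add_mul_derivWithin hg hm hu, hf0]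
  · ring
  case below =>
    intro s hs
    simp only [min_eq_left (hs.2.trans_le (min_le_right u v)).le]
    ring
  case above =>
    intro s hs
    have hvs : v ≤ s := ((min_lt_iff.mp hs.1).resolve_left hs.2.not_gt).le
    simp only [min_eq_right hvs]
    ring

theorem stmt2 (θ φ : ℝ → ℝ)
    (hθ : ContDiffOn ℝ 1 θ (Set.Icc 0 1))
    (hφ : ContDiffOn ℝ 1 φ (Set.Icc 0 1))
    (hφ0 : φ 0 = 0) :
    ∀ u ∈ Set.Icc (0:ℝ) 1, ∀ v ∈ Set.Icc (0:ℝ) 1,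
      (∫ s in (0:ℝ)..u, ∫ t in (0:ℝ)..v,
        (1 + derivWithin (fun x => θ x * φ x) (Set.Icc 0 1) (max s t) *
          derivWithin φ (Set.Icc 0 1) (min s t))) =
      (u * v + θ (max u v) * φ u * φ v) +
        ∫ t in (0:ℝ)..(min u v), derivWithin θ (Set.Icc 0 1) t * (φ t) ^ 2 := by
  intro u hu v hv
  have hθφ : ContDiffOn ℝ 1 (fun x => θ x * φ x) (Icc 0 1) := hθ.mul hφ
  have hinner : EqOn (fun s => ∫ t in (0:ℝ)..v, (1 + derivWithin (fun x => θ x * φ x)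
        (Icc 0 1) (max s t) * derivWithin φ (Icc 0 1) (min s t)))
      (fun s => v + derivWithin (fun x => θ x * φ x) (Icc 0 1) s * φ (min s v) +
        derivWithin φ (Icc 0 1) s * (θ v * φ v - θ (min s v) * φ (min s v))) (uIcc 0 u) :=
    fun s hs => integral_one_add_derivWithin_max_mul_derivWithin_min hφ hθφ hφ0
      (uIcc_subset_Icc (left_mem_Icc.2 zero_le_one) hu hs) hv
  have hprod : EqOn
      (fun s => derivWithin (fun x => θ x * φ x) (Icc 0 1) s * φ s -
        derivWithin φ (Icc 0 1) s * (θ s * φ s))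
      (fun s => derivWithin θ (Icc 0 1) s * φ s ^ 2) (uIcc 0 (min u v)) := by
    intro s hs
    have hs01 := uIcc_subset_Icc (left_mem_Icc.2 zero_le_one)
      ⟨le_min hu.1 hv.1, (min_le_left u v).trans hu.2⟩ hs
    simp only [derivWithin_fun_mul (hθ.differentiableOn one_ne_zero s hs01)
      (hφ.differentiableOn one_ne_zero s hs01)]
    ring
  rw [integral_congr hinner, integral_const_add_derivWithin_mul_comp_min hφ hθφ hφ0 hu hv,
    integral_congr hprod]
  rcases le_total u v with h | h
  · simp only [min_eq_left h, max_eq_right h]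
    ring
  · simp only [min_eq_right h, max_eq_left h]
    ring
end

section
/- Let θ, φ : [0,1] → ℝ be continuously differentiable with φ(1)·θ(1) = 0. Then the upper tail dependence coefficient of C_{θ,φ} satisfies λ = lim_{u→1⁻} (1 − 2u + C_{θ,φ}(u,u))/(1 − u) = −φ(1)²·θ'(1). -/
/-!
On the diagonal, `1 - 2u + C(u,u) = (1 - u)² + g u` with `g = θ φ²`, and `g 1 = 0` because
`φ(1) θ(1) = 0`. Dividing by `1 - u`, the square contributes `1 - u → 0` and `g u / (1 - u)` is minus
a left difference quotient of `g` at `1`, so `λ = -g'(1)`; the product rule gives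
`g'(1) = φ(1)² θ'(1)`, the terms carrying `θ(1) φ(1)` vanishing.
-/

open Filter Set Topology

theorem tendsto_diagonal_tail_of_hasDerivWithinAt {g : ℝ → ℝ} {g' : ℝ}
    (hg : HasDerivWithinAt g g' (Iio 1) 1) (hg1 : g 1 = 0) :
    Tendsto (fun u : ℝ => (1 - 2 * u + (u * u + g u)) / (1 - u)) (𝓝[<] 1) (𝓝 (-g')) := by
  have hslope : Tendsto (slope g 1) (𝓝[<] 1) (𝓝 g') := by
    simpa using hasDerivWithinAt_iff_tendsto_slope.mp hg
  have hlin : Tendsto (fun u : ℝ => 1 - u) (𝓝[<] 1) (𝓝 0) :=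
    tendsto_nhdsWithin_of_tendsto_nhds (by simpa using (continuous_sub_left (1 : ℝ)).tendsto 1)
  refine (zero_sub g' ▸ hlin.sub hslope).congr' ?_
  filter_upwards [self_mem_nhdsWithin] with u (hu : u < 1)
  have hu' : 1 - u ≠ 0 := sub_ne_zero.mpr hu.ne'
  have hu'' : u - 1 ≠ 0 := sub_ne_zero.mpr hu.ne
  rw [slope_def_field, hg1]
  field_simp
  ring

theorem HasDerivWithinAt.mul_mul_self_of_mul_eq_zero {θ φ : ℝ → ℝ} {θ' φ' x : ℝ} {s : Set ℝ}
    (hθ : HasDerivWithinAt θ θ' s x) (hφ : HasDerivWithinAt φ φ' s x) (h : φ x * θ x = 0) :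
    HasDerivWithinAt (fun u => θ u * φ u * φ u) (φ x ^ 2 * θ') s x := by
  have hderiv : (θ' * φ x + θ x * φ') * φ x + θ x * φ x * φ' = φ x ^ 2 * θ' := by
    linear_combination 2 * φ' * h
  exact hderiv ▸ (hθ.mul hφ).mul hφ

theorem stmt4 (θ φ : ℝ → ℝ)
    (hθ : ContDiffOn ℝ 1 θ (Set.Icc 0 1))
    (hφ : ContDiffOn ℝ 1 φ (Set.Icc 0 1))
    (hb : φ 1 * θ 1 = 0) :
    Filter.Tendsto
      (fun u : ℝ => (1 - 2 * u + (u * u + θ (max u u) * φ u * φ u)) / (1 - u))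
      (nhdsWithin 1 (Set.Iio 1))
      (nhds (-(φ 1 ^ 2 * derivWithin θ (Set.Icc 0 1) 1))) := by
  have h1 : (1 : ℝ) ∈ Icc 0 1 := right_mem_Icc.mpr zero_le_one
  have hθd := (hθ.differentiableOn one_ne_zero 1 h1).hasDerivWithinAt
  have hφd := (hφ.differentiableOn one_ne_zero 1 h1).hasDerivWithinAt
  have hg := (hθd.mul_mul_self_of_mul_eq_zero hφd hb).mono_of_mem_nhdsWithin
    (Icc_mem_nhdsLT zero_lt_one)
  simpa only [max_self] using
    tendsto_diagonal_tail_of_hasDerivWithinAt hg (by rw [mul_comm (θ 1), hb, zero_mul])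
end

section
/- Let θ, φ : [0,1] → ℝ with θ continuous, φ differentiable at 0 and φ(0) = 0. Then the lower tail dependence coefficient of C_{θ,φ} is always zero: lim_{u→0⁺} C_{θ,φ}(u,u)/u = 0. -/
theorem stmt5 (θ φ : ℝ → ℝ)
    (hθ : ContinuousOn θ (Set.Icc 0 1))
    (hφ : DifferentiableWithinAt ℝ φ (Set.Icc 0 1) 0)
    (hφ0 : φ 0 = 0) :
    Filter.Tendsto
      (fun u : ℝ => (u * u + θ (max u u) * φ u * φ u) / u)
      (nhdsWithin 0 (Set.Ioi 0)) (nhds 0) := by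
  have h01 : (0:ℝ) ∈ Set.Icc (0:ℝ) 1 := by norm_num
  have hle : nhdsWithin (0:ℝ) (Set.Ioi 0) ≤ nhdsWithin 0 (Set.Icc 0 1 \ {0}) := by
    rw [← nhdsWithin_Ioo_eq_nhdsGT (by norm_num : (0:ℝ) < 1)]
    apply nhdsWithin_mono
    intro x hx
    exact ⟨⟨hx.1.le, hx.2.le⟩, ne_of_gt hx.1⟩
  have hle' : nhdsWithin (0:ℝ) (Set.Ioi 0) ≤ nhdsWithin 0 (Set.Icc 0 1) :=
    hle.trans (nhdsWithin_mono _ Set.diff_subset)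
  set d := derivWithin φ (Set.Icc 0 1) 0
  have hslope : Filter.Tendsto (fun u => φ u / u) (nhdsWithin 0 (Set.Ioi 0)) (nhds d) := by
    have := hφ.hasDerivWithinAt
    rw [hasDerivWithinAt_iff_tendsto_slope] at this
    have h2 := this.mono_left hle
    refine h2.congr (fun u => ?_)
    simp [slope, hφ0, div_eq_inv_mul]
  have hφt : Filter.Tendsto φ (nhdsWithin 0 (Set.Ioi 0)) (nhds 0) := by
    have := (hφ.continuousWithinAt).mono_left hle'
    rwa [hφ0] at this
  have hθt : Filter.Tendsto θ (nhdsWithin 0 (Set.Ioi 0)) (nhds (θ 0)) :=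
    (hθ 0 h01).mono_left hle'
  have hid : Filter.Tendsto (fun u : ℝ => u) (nhdsWithin 0 (Set.Ioi 0)) (nhds 0) :=
    Filter.Tendsto.mono_left Filter.tendsto_id nhdsWithin_le_nhds
  have hmain : Filter.Tendsto (fun u : ℝ => u + θ u * (φ u / u) * φ u)
      (nhdsWithin 0 (Set.Ioi 0)) (nhds 0) := by
    have := hid.add ((hθt.mul hslope).mul hφt)
    simpa using this
  refine hmain.congr' ?_
  filter_upwards [self_mem_nhdsWithin] with u hu
  have hu0 : u ≠ 0 := ne_of_gt hu
  rw [max_self]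
  field_simp
end

section
/- Let θ, φ : [0,1] → ℝ be continuously differentiable, with θ not identically zero, the zero set of φ consisting of at most isolated points, and such that C_{θ,φ} is a copula (equivalently, conditions (a)–(d) hold). Set v* = sup{v ∈ [0,1] : θ(v) ≠ 0}. Then C_{θ,φ}(u,v) ≥ u·v for all (u,v) ∈ [0,1]² (positive quadrant dependence) if and only if θ(u) ≥ 0 for all u ∈ [0,1] and φ has constant sign on [0,v*] (i.e. φ ≥ 0 on [0,v*] or φ ≤ 0 on [0,v*]). -/
private lemma cont_delta (f : ℝ → ℝ) (s : Set ℝ) (hf : ContinuousOn f s)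
    (x : ℝ) (hx : x ∈ s) (ε : ℝ) (hε : 0 < ε) :
    ∃ δ > 0, ∀ y ∈ s, |y - x| < δ → |f y - f x| < ε := by
  obtain ⟨δ, hδ, h⟩ := Metric.continuousWithinAt_iff.mp (hf.continuousWithinAt hx) ε hε
  refine ⟨δ, hδ, fun y hy hyd => ?_⟩
  have := h hy (by simpa [Real.dist_eq] using hyd)
  simpa [Real.dist_eq] using this

theorem stmt6 (θ φ : ℝ → ℝ)
    (hθ : ContDiffOn ℝ 1 θ (Set.Icc 0 1))
    (hφ : ContDiffOn ℝ 1 φ (Set.Icc 0 1))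
    (hθne : ∃ u ∈ Set.Icc (0:ℝ) 1, θ u ≠ 0)
    (hφiso : ∀ u ∈ Set.Icc (0:ℝ) 1, φ u = 0 →
      ∃ ε > 0, ∀ x ∈ Set.Icc (0:ℝ) 1, x ≠ u → |x - u| < ε → φ x ≠ 0)
    (hC : IsCopula (fun u v => u * v + θ (max u v) * φ u * φ v))
    (vstar : ℝ) (hvstar : vstar = sSup {v : ℝ | v ∈ Set.Icc (0:ℝ) 1 ∧ θ v ≠ 0}) :
    (∀ u ∈ Set.Icc (0:ℝ) 1, ∀ v ∈ Set.Icc (0:ℝ) 1,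
        u * v + θ (max u v) * φ u * φ v ≥ u * v) ↔
      ((∀ u ∈ Set.Icc (0:ℝ) 1, 0 ≤ θ u) ∧
        ((∀ u ∈ Set.Icc (0:ℝ) vstar, 0 ≤ φ u) ∨
         (∀ u ∈ Set.Icc (0:ℝ) vstar, φ u ≤ 0))) := by
  classical
  set S : Set ℝ := {v : ℝ | v ∈ Set.Icc (0:ℝ) 1 ∧ θ v ≠ 0} with hS
  obtain ⟨u₀, hu₀, hθu₀⟩ := hθne
  have hSne : S.Nonempty := ⟨u₀, hu₀, hθu₀⟩
  have hSbdd : BddAbove S := ⟨1, fun x hx => hx.1.2⟩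
  have hmemle : ∀ v ∈ Set.Icc (0:ℝ) 1, θ v ≠ 0 → v ≤ vstar := by
    intro v hv hvne
    rw [hvstar]
    exact le_csSup hSbdd ⟨hv, hvne⟩
  have hv0 : 0 ≤ vstar := le_trans hu₀.1 (hmemle u₀ hu₀ hθu₀)
  have hv1 : vstar ≤ 1 := by
    rw [hvstar]; exact csSup_le hSne fun x hx => hx.1.2
  have hzero : ∀ v : ℝ, vstar < v → v ≤ 1 → θ v = 0 := by
    intro v hlt hle
    by_contra hne
    exact absurd (hmemle v ⟨le_trans hv0 hlt.le, hle⟩ hne) (not_le.mpr hlt)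
  have hθc : ContinuousOn θ (Set.Icc 0 1) := hθ.continuousOn
  have hφc : ContinuousOn φ (Set.Icc 0 1) := hφ.continuousOn
  constructor
  · -- hard direction
    intro h
    have hPQD : ∀ u ∈ Set.Icc (0:ℝ) 1, ∀ v ∈ Set.Icc (0:ℝ) 1,
        0 ≤ θ (max u v) * φ u * φ v := by
      intro u hu v hv
      have := h u hu v hv
      linarith
    -- Part 1 : θ ≥ 0 on [0,1]
    have hθ0 : ∀ u ∈ Set.Icc (0:ℝ) 1, 0 ≤ θ u := by
      intro v hv
      by_contra hneg
      push_neg at hneg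
      have hφv : φ v = 0 := by
        have h1 := hPQD v hv v hv
        rw [max_self] at h1
        have h2 : φ v * φ v ≤ 0 := by nlinarith
        have h3 : φ v * φ v = 0 := le_antisymm h2 (mul_self_nonneg _)
        exact mul_self_eq_zero.mp h3
      obtain ⟨ε, hε, hiso⟩ := hφiso v hv hφv
      obtain ⟨δ, hδ, hcont⟩ := cont_delta θ _ hθc v hv (-θ v) (by linarith)
      set η := min (min ε δ) 1 / 2 with hηdef
      have hη : 0 < η := by positivity
      have hη2 : η ≤ 1 / 2 := by
        have : min (min ε δ) 1 ≤ 1 := min_le_right _ _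
        rw [hηdef]; linarith
      have hηε : η < ε := by
        have h1 : min (min ε δ) 1 ≤ ε := le_trans (min_le_left _ _) (min_le_left _ _)
        rw [hηdef]; linarith
      have hηδ : η < δ := by
        have h1 : min (min ε δ) 1 ≤ δ := le_trans (min_le_left _ _) (min_le_right _ _)
        rw [hηdef]; linarith
      obtain ⟨x, hxmem, hxne, hxdist⟩ :
          ∃ x, x ∈ Set.Icc (0:ℝ) 1 ∧ x ≠ v ∧ |x - v| < min ε δ := by
        rcases le_or_gt v (1/2) with hc | hc
        · refine ⟨v + η, ⟨by linarith [hv.1], by linarith⟩, by intro hh; nlinarith [hη], ?_⟩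
          rw [show v + η - v = η by ring, abs_of_pos hη]
          exact lt_min hηε hηδ
        · refine ⟨v - η, ⟨by linarith, by linarith [hv.2]⟩, by intro hh; nlinarith [hη], ?_⟩
          rw [show v - η - v = -η by ring, abs_neg, abs_of_pos hη]
          exact lt_min hηε hηδ
      have hφx : φ x ≠ 0 := hiso x hxmem hxne (lt_of_lt_of_le hxdist (min_le_left _ _))
      have hθx : θ x < 0 := by
        have := hcont x hxmem (lt_of_lt_of_le hxdist (min_le_right _ _))
        have := abs_lt.mp this
        linarith [this.2]
      have hp := hPQD x hxmem x hxmem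
      rw [max_self] at hp
      have : 0 < φ x * φ x := mul_self_pos.mpr hφx
      nlinarith
    refine ⟨hθ0, ?_⟩
    -- Part 2 : constant sign
    by_contra hcon
    push_neg at hcon
    obtain ⟨⟨n, hn, hnneg⟩, ⟨p, hp, hppos⟩⟩ := hcon
    -- hnneg : φ n < 0, hppos : 0 < φ p
    obtain ⟨a, b, ha, hb, haltb, hprod⟩ :
        ∃ a b, a ∈ Set.Icc (0:ℝ) vstar ∧ b ∈ Set.Icc (0:ℝ) vstar ∧ a < b ∧
          φ a * φ b < 0 := by
      rcases lt_or_ge p n with hpn | hnp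
      · exact ⟨p, n, hp, hn, hpn, mul_neg_of_pos_of_neg hppos hnneg⟩
      · have : n < p := lt_of_le_of_ne hnp (fun hh => by rw [hh] at hnneg; linarith)
        exact ⟨n, p, hn, hp, this, mul_neg_of_neg_of_pos hnneg hppos⟩
    have hφa : φ a ≠ 0 := fun hh => by rw [hh] at hprod; simp at hprod
    have hφb : φ b ≠ 0 := fun hh => by rw [hh] at hprod; simp at hprod
    have haI : a ∈ Set.Icc (0:ℝ) 1 := ⟨ha.1, le_trans ha.2 hv1⟩
    have hbI : b ∈ Set.Icc (0:ℝ) 1 := ⟨hb.1, le_trans hb.2 hv1⟩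
    -- Step A1 : for t ≥ b with φ t ≠ 0, θ t = 0
    have stepA1 : ∀ t ∈ Set.Icc (0:ℝ) 1, b ≤ t → φ t ≠ 0 → θ t = 0 := by
      intro t ht hbt hφt
      by_contra hne
      have hθt : 0 < θ t := lt_of_le_of_ne (hθ0 t ht) (Ne.symm hne)
      have h1 := hPQD a haI t ht
      have h2 := hPQD b hbI t ht
      rw [max_eq_right (le_trans haltb.le hbt)] at h1
      rw [max_eq_right hbt] at h2
      have hφt2 : 0 < φ t * φ t := mul_self_pos.mpr hφt
      have key : (θ t * φ a * φ t) * (θ t * φ b * φ t)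
          = (θ t * θ t * (φ t * φ t)) * (φ a * φ b) := by ring
      have hpos : 0 < θ t * θ t * (φ t * φ t) := mul_pos (mul_pos hθt hθt) hφt2
      have hneg : (θ t * θ t * (φ t * φ t)) * (φ a * φ b) < 0 :=
        mul_neg_of_pos_of_neg hpos hprod
      nlinarith [mul_nonneg h1 h2]
    -- Step A : θ = 0 on [b,1]
    have stepA : ∀ t ∈ Set.Icc (0:ℝ) 1, b ≤ t → θ t = 0 := by
      intro t ht hbt
      by_cases hφt : φ t = 0
      · -- t > b since φ b ≠ 0
        have hbt' : b < t := lt_of_le_of_ne hbt (fun hh => hφb (hh ▸ hφt))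
        by_contra hne
        obtain ⟨ε, hε, hiso⟩ := hφiso t ht hφt
        obtain ⟨δ, hδ, hcont⟩ := cont_delta θ _ hθc t ht |θ t| (abs_pos.mpr hne)
        set m := max b (t - min ε δ) with hmdef
        have hm : m < t := by
          rw [hmdef]
          apply max_lt hbt'
          have : 0 < min ε δ := lt_min hε hδ
          linarith
        set x := (m + t) / 2 with hxdef
        have hmx : m < x := by rw [hxdef]; linarith
        have hxt : x < t := by rw [hxdef]; linarith
        have hbx : b ≤ x := le_trans (le_max_left _ _) hmx.le
        have hxI : x ∈ Set.Icc (0:ℝ) 1 := ⟨le_trans hbI.1 hbx, le_trans hxt.le ht.2⟩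
        have hxdist : |x - t| < min ε δ := by
          have h1 : t - min ε δ ≤ m := le_max_right _ _
          rw [abs_of_neg (by linarith : x - t < 0)]
          linarith
        have hφx : φ x ≠ 0 := hiso x hxI (ne_of_lt hxt)
          (lt_of_lt_of_le hxdist (min_le_left _ _))
        have hθx : θ x = 0 := stepA1 x hxI hbx hφx
        have := hcont x hxI (lt_of_lt_of_le hxdist (min_le_right _ _))
        rw [hθx] at this
        simp at this
      · exact stepA1 t ht hbt hφt
    -- Step B : vstar ≤ b, hence vstar = b
    have hvb : vstar ≤ b := by
      rw [hvstar]
      apply csSup_le hSne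
      intro x hx
      by_contra hlt
      push_neg at hlt
      exact hx.2 (stepA x hx.1 hlt.le)
    have hveq : vstar = b := le_antisymm hvb hb.2
    -- Step C : contradiction
    obtain ⟨δ, hδ, hcont⟩ := cont_delta φ _ hφc b hbI |φ b| (abs_pos.mpr hφb)
    set η := min δ (b - a) with hηdef
    have hη : 0 < η := lt_min hδ (by linarith)
    have hlt : b - η < sSup S := by
      rw [← hvstar, hveq]; linarith
    obtain ⟨v, hvS, hvgt⟩ := exists_lt_of_lt_csSup hSne hlt
    have hvle : v ≤ vstar := hmemle v hvS.1 hvS.2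
    have hvb' : v < b := by
      rcases lt_or_eq_of_le (hveq ▸ hvle) with hh | hh
      · exact hh
      · exact absurd (hh ▸ stepA b hbI le_rfl) hvS.2
    have hvdist : |v - b| < δ := by
      rw [abs_of_neg (by linarith : v - b < 0)]
      have : η ≤ δ := min_le_left _ _
      linarith
    have hφsame : 0 < φ v * φ b := by
      have habs := abs_lt.mp (hcont v hvS.1 hvdist)
      rcases lt_or_gt_of_ne hφb with hc | hc
      · rw [abs_of_neg hc] at habs
        have : φ v < 0 := by linarith [habs.2]
        exact mul_pos_of_neg_of_neg this hc
      · rw [abs_of_pos hc] at habs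
        have : 0 < φ v := by linarith [habs.1]
        exact mul_pos this hc
    have hav : a < v := by
      have : η ≤ b - a := min_le_right _ _
      linarith
    have hθv : 0 < θ v := lt_of_le_of_ne (hθ0 v hvS.1) (Ne.symm hvS.2)
    have hφav : φ a * φ v < 0 := by
      have h1 : (φ a * φ b) * (φ v * φ b) < 0 := mul_neg_of_neg_of_pos hprod hφsame
      have h2 : (φ a * φ v) * (φ b * φ b) < 0 := by nlinarith
      nlinarith [mul_self_nonneg (φ b)]
    have hfin := hPQD a haI v hvS.1
    rw [max_eq_right hav.le] at hfin
    nlinarith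
  · -- easy direction
    rintro ⟨hθ0, hsign⟩ u hu v hv
    suffices h : 0 ≤ θ (max u v) * φ u * φ v by linarith
    set m := max u v with hm
    have hmI : m ∈ Set.Icc (0:ℝ) 1 := by
      rw [hm]
      rcases max_cases u v with ⟨hh, _⟩ | ⟨hh, _⟩ <;> rw [hh] <;> assumption
    rcases le_or_gt m vstar with hc | hc
    · have huv : u ∈ Set.Icc (0:ℝ) vstar := ⟨hu.1, le_trans (le_max_left u v) hc⟩
      have hvv : v ∈ Set.Icc (0:ℝ) vstar := ⟨hv.1, le_trans (le_max_right u v) hc⟩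
      have hφφ : 0 ≤ φ u * φ v := by
        rcases hsign with hs | hs
        · exact mul_nonneg (hs u huv) (hs v hvv)
        · nlinarith [hs u huv, hs v hvv]
      calc (0:ℝ) ≤ θ m * (φ u * φ v) := mul_nonneg (hθ0 m hmI) hφφ
        _ = θ m * φ u * φ v := by ring
    · rw [hzero m hc hmI.2]
      simp
end

section
/- Let θ, φ : [0,1] → ℝ be continuously differentiable, with θ not identically zero, the zero set of φ consisting of at most isolated points, and such that C_{θ,φ} is a copula (conditions (a)–(d)). Set v* = sup{v ∈ [0,1] : θ(v) ≠ 0}. Then the map u ↦ C_{θ,φ}(u,v)/u is non-increasing on (0,1] for every v ∈ [0,1] (left tail decreasing) if and only if θ(u) ≥ 0 for all u ∈ [0,1] and the maps u ↦ φ(u)/u and u ↦ θ(u)·φ(u)/u are either both non-increasing on (0,v*] or both non-decreasing on (0,v*]. -/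
open Topology Filter

lemma sign_stable {f : ℝ → ℝ} {s : Set ℝ} (hf : ContinuousOn f s) {u : ℝ} (hu : u ∈ s)
    (hfu : f u ≠ 0) : ∃ δ > 0, ∀ x ∈ s, |x - u| < δ → f x * f u > 0 := by
  obtain ⟨δ, hδ, h⟩ := Metric.continuousWithinAt_iff.mp (hf u hu) (|f u|) (abs_pos.mpr hfu)
  refine ⟨δ, hδ, fun x hx hd => ?_⟩
  have h2 := h hx (by rw [Real.dist_eq]; exact hd)
  rw [Real.dist_eq] at h2
  have h3 := abs_lt.mp h2
  rcases hfu.lt_or_gt with hlt | hlt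
  · rw [abs_of_neg hlt] at h3
    have : f x < 0 := by linarith [h3.1]
    exact mul_pos_of_neg_of_neg this hlt
  · rw [abs_of_pos hlt] at h3
    have : 0 < f x := by linarith [h3.2]
    exact mul_pos this hlt

lemma ext_left {g : ℝ → ℝ} {a b : ℝ} (h1 : a < b)
    (hc : ContinuousWithinAt g (Set.Ioo a b) b)
    (h : ∀ x ∈ Set.Ioo a b, g x ≤ g a) : g b ≤ g a := by
  have hne : (nhdsWithin b (Set.Ioo a b)).NeBot := by
    rw [← mem_closure_iff_nhdsWithin_neBot, closure_Ioo h1.ne]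
    exact ⟨h1.le, le_rfl⟩
  exact le_of_tendsto hc (Filter.eventually_of_mem self_mem_nhdsWithin h)

lemma ext_left' {g : ℝ → ℝ} {a b : ℝ} (h1 : a < b)
    (hc : ContinuousWithinAt g (Set.Ioo a b) b)
    (h : ∀ x ∈ Set.Ioo a b, g a ≤ g x) : g a ≤ g b := by
  have hne : (nhdsWithin b (Set.Ioo a b)).NeBot := by
    rw [← mem_closure_iff_nhdsWithin_neBot, closure_Ioo h1.ne]
    exact ⟨h1.le, le_rfl⟩
  exact ge_of_tendsto hc (Filter.eventually_of_mem self_mem_nhdsWithin h)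

set_option maxHeartbeats 1000000 in
theorem stmt7 (θ φ : ℝ → ℝ)
    (hθ : ContDiffOn ℝ 1 θ (Set.Icc 0 1))
    (hφ : ContDiffOn ℝ 1 φ (Set.Icc 0 1))
    (hθne : ∃ u ∈ Set.Icc (0:ℝ) 1, θ u ≠ 0)
    (hφiso : ∀ u ∈ Set.Icc (0:ℝ) 1, φ u = 0 →
      ∃ ε > 0, ∀ x ∈ Set.Icc (0:ℝ) 1, x ≠ u → |x - u| < ε → φ x ≠ 0)
    (hC : IsCopula (fun u v => u * v + θ (max u v) * φ u * φ v))
    (vstar : ℝ) (hvstar : vstar = sSup {v : ℝ | v ∈ Set.Icc (0:ℝ) 1 ∧ θ v ≠ 0}) :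
    (∀ v ∈ Set.Icc (0:ℝ) 1,
        AntitoneOn (fun u => (u * v + θ (max u v) * φ u * φ v) / u) (Set.Ioc 0 1)) ↔
      ((∀ u ∈ Set.Icc (0:ℝ) 1, 0 ≤ θ u) ∧
        ((AntitoneOn (fun u => φ u / u) (Set.Ioc 0 vstar) ∧
          AntitoneOn (fun u => θ u * φ u / u) (Set.Ioc 0 vstar)) ∨
         (MonotoneOn (fun u => φ u / u) (Set.Ioc 0 vstar) ∧
          MonotoneOn (fun u => θ u * φ u / u) (Set.Ioc 0 vstar)))) := by
  have hθc : ContinuousOn θ (Set.Icc 0 1) := hθ.continuousOn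
  have hφc : ContinuousOn φ (Set.Icc 0 1) := hφ.continuousOn
  obtain ⟨hC0, hCb, _⟩ := hC
  -- left-approach point with nonzero φ
  have hFleft : ∀ u, 0 < u → u ≤ 1 → ∀ δ, 0 < δ →
      ∃ x, 0 < x ∧ x ≤ u ∧ u - x < δ ∧ φ x ≠ 0 := by
    intro u hu0 hu1 δ hδ
    by_cases hφu : φ u = 0
    · obtain ⟨ε, hε, hiso⟩ := hφiso u ⟨hu0.le, hu1⟩ hφu
      set m := min (min ε δ) u with hm
      have hm0 : 0 < m := lt_min (lt_min hε hδ) hu0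
      have hmε : m ≤ ε := (min_le_left _ _).trans (min_le_left _ _)
      have hmδ : m ≤ δ := (min_le_left _ _).trans (min_le_right _ _)
      have hmu : m ≤ u := min_le_right _ _
      refine ⟨u - m / 2, by linarith, by linarith, by linarith, ?_⟩
      refine hiso _ ⟨by linarith, by linarith⟩ (by intro hh; nlinarith [hh]) ?_
      rw [abs_of_nonpos (by linarith)]
      linarith
    · exact ⟨u, hu0, le_rfl, by linarith, hφu⟩
  -- a point where both θ and φ are nonzero
  have hF0 : ∃ u, u ∈ Set.Icc (0:ℝ) 1 ∧ θ u ≠ 0 ∧ φ u ≠ 0 := by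
    obtain ⟨u₀, hu₀, hθu₀⟩ := hθne
    obtain ⟨δ, hδ, hsign⟩ := sign_stable hθc hu₀ hθu₀
    by_cases hφu : φ u₀ = 0
    · obtain ⟨ε, hε, hiso⟩ := hφiso u₀ hu₀ hφu
      have key : ∀ x ∈ Set.Icc (0:ℝ) 1, x ≠ u₀ → |x - u₀| < min ε δ →
          θ x ≠ 0 ∧ φ x ≠ 0 := by
        intro x hx hne habs
        refine ⟨fun hz => ?_, hiso x hx hne (habs.trans_le (min_le_left _ _))⟩
        have := hsign x hx (habs.trans_le (min_le_right _ _))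
        rw [hz] at this; simp at this
      rcases lt_or_ge u₀ 1 with hlt | hge
      · set m := min (min ε δ) (1 - u₀) with hm
        have hm0 : 0 < m := lt_min (lt_min hε hδ) (by linarith)
        have h1 : m ≤ min ε δ := min_le_left _ _
        have h3 : m ≤ 1 - u₀ := min_le_right _ _
        have hxmem : u₀ + m / 2 ∈ Set.Icc (0:ℝ) 1 := ⟨by linarith [hu₀.1], by linarith⟩
        have habs : |u₀ + m / 2 - u₀| < min ε δ := by
          rw [show u₀ + m / 2 - u₀ = m / 2 by ring, abs_of_pos (by linarith)]; linarith
        obtain ⟨hθx, hφx⟩ := key _ hxmem (by intro hh; linarith [congrArg (· - u₀) hh]) habs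
        exact ⟨_, hxmem, hθx, hφx⟩
      · have hu1 : u₀ = 1 := le_antisymm hu₀.2 hge
        set m := min (min ε δ) 1 with hm
        have hm0 : 0 < m := lt_min (lt_min hε hδ) one_pos
        have h1 : m ≤ min ε δ := min_le_left _ _
        have h3 : m ≤ 1 := min_le_right _ _
        have hxmem : u₀ - m / 2 ∈ Set.Icc (0:ℝ) 1 := ⟨by rw [hu1]; linarith, by linarith [hu₀.2]⟩
        have habs : |u₀ - m / 2 - u₀| < min ε δ := by
          rw [show u₀ - m / 2 - u₀ = -(m / 2) by ring, abs_neg, abs_of_pos (by linarith)]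
          linarith
        obtain ⟨hθx, hφx⟩ := key _ hxmem (by intro hh; linarith [congrArg (· - u₀) hh]) habs
        exact ⟨_, hxmem, hθx, hφx⟩
    · exact ⟨u₀, hu₀, hθu₀, hφu⟩
  obtain ⟨w₀, hw₀mem, hθw₀, hφw₀⟩ := hF0
  -- φ 0 = 0
  have ha : φ 0 = 0 := by
    have h := (hC0 w₀ hw₀mem).2
    simp only [zero_mul, zero_add, max_eq_right hw₀mem.1] at h
    have hne : θ w₀ * φ w₀ ≠ 0 := mul_ne_zero hθw₀ hφw₀
    have : θ w₀ * φ w₀ * φ 0 = 0 := by linarith [h]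
    exact (mul_eq_zero.mp this).resolve_left hne
  -- θ 1 * φ 1 = 0
  have hb : θ 1 * φ 1 = 0 := by
    have h := (hCb w₀ hw₀mem).1
    simp only [mul_one, max_eq_right hw₀mem.2] at h
    have : φ w₀ * (θ 1 * φ 1) = 0 := by linarith [h]
    exact (mul_eq_zero.mp this).resolve_left hφw₀
  -- vstar facts
  set S := {v : ℝ | v ∈ Set.Icc (0:ℝ) 1 ∧ θ v ≠ 0} with hS
  have hSne : S.Nonempty := ⟨w₀, hw₀mem, hθw₀⟩
  have hSbdd : BddAbove S := ⟨1, fun x hx => hx.1.2⟩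
  have hv1 : vstar ≤ 1 := by rw [hvstar]; exact csSup_le hSne fun x hx => hx.1.2
  have hv0 : 0 < vstar := by
    obtain ⟨δ, hδ, hsign⟩ := sign_stable hθc hw₀mem hθw₀
    rcases lt_or_ge 0 w₀ with h | h
    · exact lt_of_lt_of_le h (by rw [hvstar]; exact le_csSup hSbdd ⟨hw₀mem, hθw₀⟩)
    · have hw0 : w₀ = 0 := le_antisymm h hw₀mem.1
      set x := min δ 1 / 2 with hx
      have hx0 : 0 < x := by positivity
      have hx1 : x ≤ 1 := by
        have : min δ 1 ≤ 1 := min_le_right _ _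
        linarith
      have hxd : |x - w₀| < δ := by
        rw [hw0, sub_zero, abs_of_pos hx0]
        have : min δ 1 ≤ δ := min_le_left _ _
        linarith
      have hθx : θ x ≠ 0 := by
        intro hz
        have := hsign x ⟨hx0.le, hx1⟩ hxd
        rw [hz] at this; simp at this
      calc 0 < x := hx0
        _ ≤ vstar := by rw [hvstar]; exact le_csSup hSbdd ⟨⟨hx0.le, hx1⟩, hθx⟩
  have hθz : ∀ x, vstar < x → x ≤ 1 → θ x = 0 := by
    intro x hvx hx1
    by_contra hne
    have : x ≤ vstar := by
      rw [hvstar]; exact le_csSup hSbdd ⟨⟨(hv0.trans hvx).le, hx1⟩, hne⟩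
    linarith
  have hvmem : vstar ∈ Set.Icc (0:ℝ) 1 := ⟨hv0.le, hv1⟩
  have hθφv : θ vstar * φ vstar = 0 := by
    rcases eq_or_lt_of_le hv1 with heq | hlt
    · rw [heq]; exact hb
    · have hθv : θ vstar = 0 := by
        by_contra hne
        obtain ⟨δ, hδ, hsign⟩ := sign_stable hθc hvmem hne
        set x := vstar + min δ (1 - vstar) / 2 with hx
        have hm0 : 0 < min δ (1 - vstar) := lt_min hδ (by linarith)
        have h1 : min δ (1 - vstar) ≤ δ := min_le_left _ _
        have h2 : min δ (1 - vstar) ≤ 1 - vstar := min_le_right _ _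
        have hxmem : x ∈ Set.Icc (0:ℝ) 1 := ⟨by simp only [hx]; linarith, by simp only [hx]; linarith⟩
        have hxd : |x - vstar| < δ := by
          rw [show x - vstar = min δ (1 - vstar) / 2 by simp only [hx]; ring,
            abs_of_pos (by linarith)]
          linarith
        have hθx : θ x = 0 := hθz x (by simp only [hx]; linarith) hxmem.2
        have := hsign x hxmem hxd
        rw [hθx] at this; simp at this
      rw [hθv, zero_mul]
  have hSgt : ∀ a, a < vstar → ∃ v, a < v ∧ v ≤ vstar ∧ θ v ≠ 0 := by
    intro a hav
    obtain ⟨v, hvS, hav'⟩ := exists_lt_of_lt_csSup hSne (by rw [hvstar] at hav; exact hav)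
    exact ⟨v, hav', by rw [hvstar]; exact le_csSup hSbdd hvS, hvS.2⟩
  have hF1 : ∀ a, 0 ≤ a → a < vstar → ∃ v, a < v ∧ v ≤ vstar ∧ θ v ≠ 0 ∧ φ v ≠ 0 := by
    intro a ha0 hav
    obtain ⟨v₀, hav₀, hv₀v, hθv₀⟩ := hSgt a hav
    have hv₀mem : v₀ ∈ Set.Icc (0:ℝ) 1 := ⟨(ha0.trans_lt hav₀).le, hv₀v.trans hv1⟩
    obtain ⟨δ, hδ, hsign⟩ := sign_stable hθc hv₀mem hθv₀
    obtain ⟨x, hx0, hxv₀, hxd, hφx⟩ := hFleft v₀ (ha0.trans_lt hav₀) hv₀mem.2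
      (min δ (v₀ - a)) (lt_min hδ (by linarith))
    have hd1 : v₀ - x < δ := hxd.trans_le (min_le_left _ _)
    have hd2 : v₀ - x < v₀ - a := hxd.trans_le (min_le_right _ _)
    have hθx : θ x ≠ 0 := by
      intro hz
      have := hsign x ⟨hx0.le, hxv₀.trans hv₀mem.2⟩
        (by rw [abs_of_nonpos (by linarith)]; linarith)
      rw [hz] at this; simp at this
    exact ⟨x, by linarith, hxv₀.trans hv₀v, hθx, hφx⟩
  -- algebraic rewriting helper
  have hfeq : ∀ (v u A : ℝ), u ≠ 0 → (u * v + A) / u = v + A / u := by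
    intro v u A hu
    rw [add_div, mul_div_cancel_left₀ _ hu]
  -- move a point with nonzero φ strictly below vstar keeping the sign
  have hmove : ∀ s, 0 < s → s ≤ vstar → φ s ≠ 0 →
      ∃ t, 0 < t ∧ t < vstar ∧ φ t * φ s > 0 := by
    intro s hs0 hsv hφs
    rcases lt_or_eq_of_le hsv with h | h
    · exact ⟨s, hs0, h, mul_self_pos.mpr hφs⟩
    · obtain ⟨δ, hδ, hsign⟩ := sign_stable hφc ⟨hs0.le, hsv.trans hv1⟩ hφs
      have hm0 : 0 < min δ s := lt_min hδ hs0
      have h1 : min δ s ≤ δ := min_le_left _ _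
      have h2 : min δ s ≤ s := min_le_right _ _
      refine ⟨s - min δ s / 2, by linarith, by linarith, ?_⟩
      exact hsign _ ⟨by linarith, by linarith [hsv.trans hv1]⟩
        (by rw [show s - min δ s / 2 - s = -(min δ s / 2) by ring, abs_neg,
          abs_of_pos (by linarith)]; linarith)
  -- continuity of φ(u)/u at vstar within Ioo u₁ vstar
  have hcontg : ∀ u₁, 0 < u₁ →
      ContinuousWithinAt (fun u => φ u / u) (Set.Ioo u₁ vstar) vstar := by
    intro u₁ hu₁
    have hsub : Set.Ioo u₁ vstar ⊆ Set.Icc (0:ℝ) 1 :=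
      fun x hx => ⟨(hu₁.trans hx.1).le, hx.2.le.trans hv1⟩
    exact (((hφc vstar hvmem).mono hsub).div
      (continuousWithinAt_id.mono hsub) hv0.ne')
  constructor
  · -- forward direction
    intro h
    have hlt1 : ∀ v, 0 ≤ v → v ≤ 1 → ∀ u₁ u₂, 0 < u₁ → u₁ ≤ u₂ → u₂ ≤ v →
        θ v * φ v * (φ u₂ / u₂) ≤ θ v * φ v * (φ u₁ / u₁) := by
      intro v h0 h1 u₁ u₂ hu₁ h12 h2v
      have hu₂ : 0 < u₂ := hu₁.trans_le h12
      have hm := h v ⟨h0, h1⟩ ⟨hu₁, (h12.trans h2v).trans h1⟩ ⟨hu₂, h2v.trans h1⟩ h12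
      simp only [max_eq_right h2v, max_eq_right (h12.trans h2v),
        hfeq v u₂ _ hu₂.ne', hfeq v u₁ _ hu₁.ne'] at hm
      have e₂ : θ v * φ u₂ * φ v / u₂ = θ v * φ v * (φ u₂ / u₂) := by ring
      have e₁ : θ v * φ u₁ * φ v / u₁ = θ v * φ v * (φ u₁ / u₁) := by ring
      linarith [hm]
    have hgt1 : ∀ v, 0 ≤ v → ∀ u₁ u₂, v ≤ u₁ → 0 < u₁ → u₁ ≤ u₂ → u₂ ≤ 1 →
        φ v * (θ u₂ * φ u₂ / u₂) ≤ φ v * (θ u₁ * φ u₁ / u₁) := by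
      intro v h0 u₁ u₂ hvu₁ hu₁ h12 h2
      have hu₂ : 0 < u₂ := hu₁.trans_le h12
      have hm := h v ⟨h0, (hvu₁.trans h12).trans h2⟩ ⟨hu₁, h12.trans h2⟩ ⟨hu₂, h2⟩ h12
      simp only [max_eq_left (hvu₁.trans h12), max_eq_left hvu₁,
        hfeq v u₂ _ hu₂.ne', hfeq v u₁ _ hu₁.ne'] at hm
      have e₂ : θ u₂ * φ u₂ * φ v / u₂ = φ v * (θ u₂ * φ u₂ / u₂) := by ring
      have e₁ : θ u₁ * φ u₁ * φ v / u₁ = φ v * (θ u₁ * φ u₁ / u₁) := by ring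
      linarith [hm]
    have hnonneg : ∀ w v, 0 < w → w ≤ v → v ≤ 1 → 0 ≤ θ v * φ w * φ v := by
      intro w v hw hwv hv1'
      have h0v : 0 ≤ v := (hw.trans_le hwv).le
      have hm := h v ⟨h0v, hv1'⟩ ⟨hw, hwv.trans hv1'⟩ ⟨one_pos, le_rfl⟩ (hwv.trans hv1')
      simp only [max_eq_right hwv, max_eq_left hv1', one_mul, div_one,
        hfeq v w _ hw.ne'] at hm
      have hb' : θ 1 * φ 1 * φ v = 0 := by rw [hb, zero_mul]
      have h2 : 0 ≤ θ v * φ w * φ v / w := by linarith [hm]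
      have := mul_nonneg h2 hw.le
      rwa [div_mul_cancel₀ _ hw.ne'] at this
    have hθ0 : ∀ u ∈ Set.Icc (0:ℝ) 1, 0 ≤ θ u := by
      intro u hu
      by_contra hcon
      push_neg at hcon
      obtain ⟨δ, hδ, hsign⟩ := sign_stable hθc hu (ne_of_lt hcon)
      have hpick : ∃ x, 0 < x ∧ x ≤ 1 ∧ |x - u| < δ ∧ φ x ≠ 0 := by
        rcases lt_or_ge 0 u with h0u | h0u
        · obtain ⟨x, hx0, hxu, hxd, hφx⟩ := hFleft u h0u hu.2 δ hδ
          exact ⟨x, hx0, hxu.trans hu.2, by rw [abs_of_nonpos (by linarith)]; linarith, hφx⟩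
        · have hu0 : u = 0 := le_antisymm h0u hu.1
          set p := min δ 1 / 2 with hp
          have hp0 : 0 < p := by positivity
          have hpδ : p < δ := by
            have : min δ 1 ≤ δ := min_le_left _ _
            simp only [hp]; linarith
          have hp1 : p ≤ 1 := by
            have : min δ 1 ≤ 1 := min_le_right _ _
            simp only [hp]; linarith
          obtain ⟨x, hx0, hxp, _, hφx⟩ := hFleft p hp0 hp1 p hp0
          exact ⟨x, hx0, hxp.trans hp1,
            by rw [hu0, sub_zero, abs_of_pos hx0]; linarith, hφx⟩
      obtain ⟨x, hx0, hx1, hxd, hφx⟩ := hpick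
      have hθx : θ x < 0 := by
        have := hsign x ⟨hx0.le, hx1⟩ hxd
        nlinarith
      have := hnonneg x x hx0 le_rfl hx1
      nlinarith [mul_self_pos.mpr hφx]
    refine ⟨hθ0, ?_⟩
    by_cases hneg : ∃ w, 0 < w ∧ w ≤ vstar ∧ φ w < 0
    · -- monotone branch
      obtain ⟨w₀, hw₀0, hw₀v, hφw₀⟩ := hneg
      have hsφ : ∀ x, 0 < x → x ≤ vstar → φ x ≤ 0 := by
        intro x hx0 hxv
        by_contra hcon
        push_neg at hcon
        obtain ⟨w₁, hw₁0, hw₁v, hw₁s⟩ := hmove w₀ hw₀0 hw₀v (ne_of_lt hφw₀)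
        have hφw₁ : φ w₁ < 0 := by nlinarith
        obtain ⟨x₁, hx₁0, hx₁v, hx₁s⟩ := hmove x hx0 hxv (ne_of_gt hcon)
        have hφx₁ : 0 < φ x₁ := by nlinarith
        obtain ⟨v, hvgt, hvv, hθv, hφv⟩ := hF1 (max w₁ x₁)
          (le_max_of_le_left hw₁0.le) (max_lt hw₁v hx₁v)
        have hθvpos : 0 < θ v :=
          (hθ0 v ⟨(hw₁0.trans_le ((le_max_left _ _).trans hvgt.le)).le,
            hvv.trans hv1⟩).lt_of_ne (Ne.symm hθv)
        have h1 := hnonneg w₁ v hw₁0 ((le_max_left _ _).trans hvgt.le) (hvv.trans hv1)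
        have h2 := hnonneg x₁ v hx₁0 ((le_max_right _ _).trans hvgt.le) (hvv.trans hv1)
        have hle : φ v ≤ 0 := by
          by_contra hcv
          push_neg at hcv
          nlinarith [mul_pos hθvpos hcv]
        have hge : 0 ≤ φ v := by
          by_contra hcv
          push_neg at hcv
          nlinarith [mul_pos hθvpos hφx₁]
        exact hφv (le_antisymm hle hge)
      have M1 : ∀ u₁ u₂, 0 < u₁ → u₁ ≤ u₂ → u₂ < vstar → φ u₁ / u₁ ≤ φ u₂ / u₂ := by
        intro u₁ u₂ hu₁ h12 h2v
        obtain ⟨v, huv, hvv, hθv, hφv⟩ := hF1 u₂ (hu₁.trans_le h12).le h2v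
        have hv0' : 0 < v := (hu₁.trans_le h12).trans huv
        have hθvpos : 0 < θ v := (hθ0 v ⟨hv0'.le, hvv.trans hv1⟩).lt_of_ne (Ne.symm hθv)
        have hφvneg : φ v < 0 := (hsφ v hv0' hvv).lt_of_ne hφv
        have key := hlt1 v hv0'.le (hvv.trans hv1) u₁ u₂ hu₁ h12 huv.le
        nlinarith [mul_neg_of_pos_of_neg hθvpos hφvneg]
      have hMA : MonotoneOn (fun u => φ u / u) (Set.Ioc 0 vstar) := by
        intro u₁ h₁ u₂ h₂ h12
        rcases lt_or_eq_of_le h₂.2 with h2v | h2v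
        · exact M1 u₁ u₂ h₁.1 h12 h2v
        · rcases eq_or_lt_of_le h12 with he | hlt
          · rw [he]
          · rw [h2v] at hlt ⊢
            exact ext_left' hlt (hcontg u₁ h₁.1) fun x hx => M1 u₁ x h₁.1 hx.1.le hx.2
      have hMB : MonotoneOn (fun u => θ u * φ u / u) (Set.Ioc 0 vstar) := by
        intro u₁ h₁ u₂ h₂ h12
        obtain ⟨x, hx0, hxu₁, _, hφx⟩ := hFleft u₁ h₁.1 (h₁.2.trans hv1) u₁ h₁.1
        have hφxneg : φ x < 0 := (hsφ x hx0 (hxu₁.trans h₁.2)).lt_of_ne hφx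
        have key := hgt1 x hx0.le u₁ u₂ hxu₁ h₁.1 h12 (h₂.2.trans hv1)
        nlinarith
      exact Or.inr ⟨hMA, hMB⟩
    · -- antitone branch
      push_neg at hneg
      have hsφ : ∀ x, 0 < x → x ≤ vstar → 0 ≤ φ x := hneg
      have A1 : ∀ u₁ u₂, 0 < u₁ → u₁ ≤ u₂ → u₂ < vstar → φ u₂ / u₂ ≤ φ u₁ / u₁ := by
        intro u₁ u₂ hu₁ h12 h2v
        obtain ⟨v, huv, hvv, hθv, hφv⟩ := hF1 u₂ (hu₁.trans_le h12).le h2v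
        have hv0' : 0 < v := (hu₁.trans_le h12).trans huv
        have hθvpos : 0 < θ v := (hθ0 v ⟨hv0'.le, hvv.trans hv1⟩).lt_of_ne (Ne.symm hθv)
        have hφvpos : 0 < φ v := (hsφ v hv0' hvv).lt_of_ne (Ne.symm hφv)
        have key := hlt1 v hv0'.le (hvv.trans hv1) u₁ u₂ hu₁ h12 huv.le
        exact le_of_mul_le_mul_left key (mul_pos hθvpos hφvpos)
      have hAA : AntitoneOn (fun u => φ u / u) (Set.Ioc 0 vstar) := by
        intro u₁ h₁ u₂ h₂ h12
        rcases lt_or_eq_of_le h₂.2 with h2v | h2v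
        · exact A1 u₁ u₂ h₁.1 h12 h2v
        · rcases eq_or_lt_of_le h12 with he | hlt
          · rw [he]
          · rw [h2v] at hlt ⊢
            exact ext_left hlt (hcontg u₁ h₁.1) fun x hx => A1 u₁ x h₁.1 hx.1.le hx.2
      have hAB : AntitoneOn (fun u => θ u * φ u / u) (Set.Ioc 0 vstar) := by
        intro u₁ h₁ u₂ h₂ h12
        obtain ⟨x, hx0, hxu₁, _, hφx⟩ := hFleft u₁ h₁.1 (h₁.2.trans hv1) u₁ h₁.1
        have hφxpos : 0 < φ x := (hsφ x hx0 (hxu₁.trans h₁.2)).lt_of_ne (Ne.symm hφx)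
        have key := hgt1 x hx0.le u₁ u₂ hxu₁ h₁.1 h12 (h₂.2.trans hv1)
        exact le_of_mul_le_mul_left key hφxpos
      exact Or.inl ⟨hAA, hAB⟩
  · -- backward direction
    rintro ⟨hθ0, hcase⟩ v hv u₁ hm₁ u₂ hm₂ h12
    simp only []
    rw [hfeq v u₂ _ (ne_of_gt hm₂.1), hfeq v u₁ _ (ne_of_gt hm₁.1)]
    have hsuff : θ (max u₂ v) * φ u₂ * φ v / u₂ ≤ θ (max u₁ v) * φ u₁ * φ v / u₁ → 
        v + θ (max u₂ v) * φ u₂ * φ v / u₂ ≤ v + θ (max u₁ v) * φ u₁ * φ v / u₁ :=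
      fun hh => by linarith
    apply hsuff
    rcases eq_or_lt_of_le hv.1 with hv0' | hv0'
    · rw [← hv0', ha]; simp
    rcases lt_or_ge vstar v with hvv | hvv
    · rw [hθz (max u₂ v) (hvv.trans_le (le_max_right _ _)) (max_le hm₂.2 hv.2),
        hθz (max u₁ v) (hvv.trans_le (le_max_right _ _)) (max_le hm₁.2 hv.2)]
      simp
    -- now 0 < v ≤ vstar
    rcases hcase with ⟨hA, hB⟩ | ⟨hA, hB⟩
    · -- antitone case : φ ≥ 0 and θφ/u ≥ 0 on (0, vstar]
      have hG0 : ∀ u, 0 < u → u ≤ vstar → 0 ≤ θ u * φ u / u := by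
        intro u hu huv
        have h2 := hB ⟨hu, huv⟩ ⟨hv0, le_rfl⟩ huv
        simpa only [hθφv, zero_div] using h2
      have hφ0 : ∀ u, 0 < u → u ≤ vstar → 0 ≤ φ u := by
        intro u hu huv
        by_contra hcon
        push_neg at hcon
        obtain ⟨t, ht0, htv, hts⟩ := hmove u hu huv (ne_of_lt hcon)
        have hφt : φ t < 0 := by nlinarith
        obtain ⟨w, htw, hwv, hθw, hφw⟩ := hF1 t ht0.le htv
        have hw0 : 0 < w := ht0.trans htw
        have hθwpos : 0 < θ w := (hθ0 w ⟨hw0.le, hwv.trans hv1⟩).lt_of_ne (Ne.symm hθw)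
        have hq := hA ⟨ht0, htv.le⟩ ⟨hw0, hwv⟩ htw.le
        have hφwneg : φ w < 0 := by
          have h1 : φ w / w < 0 := lt_of_le_of_lt hq (div_neg_of_neg_of_pos hφt ht0)
          have := mul_neg_of_neg_of_pos h1 hw0
          rwa [div_mul_cancel₀ _ hw0.ne'] at this
        have := hG0 w hw0 hwv
        nlinarith [div_neg_of_neg_of_pos (mul_neg_of_pos_of_neg hθwpos hφwneg) hw0]
      have hφv : 0 ≤ φ v := hφ0 v hv0' hvv
      have key2 : ∀ a b, 0 < a → a ≤ b → b ≤ v →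
          θ v * φ b * φ v / b ≤ θ v * φ a * φ v / a := by
        intro a b ha0 hab hbv
        have e : ∀ c, θ v * φ c * φ v / c = θ v * φ v * (φ c / c) := fun c => by ring
        rw [e, e]
        exact mul_le_mul_of_nonneg_left
          (hA ⟨ha0, (hab.trans hbv).trans hvv⟩ ⟨ha0.trans_le hab, hbv.trans hvv⟩ hab)
          (mul_nonneg (hθ0 v ⟨hv0'.le, hv.2⟩) hφv)
      have key3 : ∀ a b, 0 < a → v ≤ a → a ≤ b → b ≤ 1 →
          θ b * φ b * φ v / b ≤ θ a * φ a * φ v / a := by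
        intro a b ha0 hva hab hb1
        have e : ∀ c, θ c * φ c * φ v / c = φ v * (θ c * φ c / c) := fun c => by ring
        rw [e, e]
        apply mul_le_mul_of_nonneg_left _ hφv
        rcases le_or_gt b vstar with hbv | hbv
        · exact hB ⟨ha0, hab.trans hbv⟩ ⟨ha0.trans_le hab, hbv⟩ hab
        · rw [hθz b hbv hb1, zero_mul, zero_div]
          rcases le_or_gt a vstar with hav | hav
          · exact hG0 a ha0 hav
          · rw [hθz a hav (hab.trans hb1), zero_mul, zero_div]
      rcases le_total u₂ v with hle | hle
      · rw [max_eq_right hle, max_eq_right (h12.trans hle)]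
        exact key2 u₁ u₂ hm₁.1 h12 hle
      rcases le_total v u₁ with hle' | hle'
      · rw [max_eq_left hle, max_eq_left hle']
        exact key3 u₁ u₂ hm₁.1 hle' h12 hm₂.2
      · rw [max_eq_left hle, max_eq_right hle']
        calc θ u₂ * φ u₂ * φ v / u₂ ≤ θ v * φ v * φ v / v :=
              key3 v u₂ hv0' le_rfl hle hm₂.2
          _ ≤ θ v * φ u₁ * φ v / u₁ := key2 u₁ v hm₁.1 hle' le_rfl
    · -- monotone case : φ ≤ 0 and θφ/u ≤ 0 on (0, vstar]
      have hG0 : ∀ u, 0 < u → u ≤ vstar → θ u * φ u / u ≤ 0 := by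
        intro u hu huv
        have h2 := hB ⟨hu, huv⟩ ⟨hv0, le_rfl⟩ huv
        simpa only [hθφv, zero_div] using h2
      have hφ0 : ∀ u, 0 < u → u ≤ vstar → φ u ≤ 0 := by
        intro u hu huv
        by_contra hcon
        push_neg at hcon
        obtain ⟨t, ht0, htv, hts⟩ := hmove u hu huv (ne_of_gt hcon)
        have hφt : 0 < φ t := by nlinarith
        obtain ⟨w, htw, hwv, hθw, hφw⟩ := hF1 t ht0.le htv
        have hw0 : 0 < w := ht0.trans htw
        have hθwpos : 0 < θ w := (hθ0 w ⟨hw0.le, hwv.trans hv1⟩).lt_of_ne (Ne.symm hθw)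
        have hq := hA ⟨ht0, htv.le⟩ ⟨hw0, hwv⟩ htw.le
        have hφwpos : 0 < φ w := by
          have h1 : 0 < φ w / w := lt_of_lt_of_le (div_pos hφt ht0) hq
          have := mul_pos h1 hw0
          rwa [div_mul_cancel₀ _ hw0.ne'] at this
        have := hG0 w hw0 hwv
        nlinarith [div_pos (mul_pos hθwpos hφwpos) hw0]
      have hφv : φ v ≤ 0 := hφ0 v hv0' hvv
      have key2 : ∀ a b, 0 < a → a ≤ b → b ≤ v →
          θ v * φ b * φ v / b ≤ θ v * φ a * φ v / a := by
        intro a b ha0 hab hbv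
        have e : ∀ c, θ v * φ c * φ v / c = θ v * φ v * (φ c / c) := fun c => by ring
        rw [e, e]
        exact mul_le_mul_of_nonpos_left
          (hA ⟨ha0, (hab.trans hbv).trans hvv⟩ ⟨ha0.trans_le hab, hbv.trans hvv⟩ hab)
          (mul_nonpos_of_nonneg_of_nonpos (hθ0 v ⟨hv0'.le, hv.2⟩) hφv)
      have key3 : ∀ a b, 0 < a → v ≤ a → a ≤ b → b ≤ 1 →
          θ b * φ b * φ v / b ≤ θ a * φ a * φ v / a := by
        intro a b ha0 hva hab hb1
        have e : ∀ c, θ c * φ c * φ v / c = φ v * (θ c * φ c / c) := fun c => by ring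
        rw [e, e]
        apply mul_le_mul_of_nonpos_left _ hφv
        rcases le_or_gt b vstar with hbv | hbv
        · exact hB ⟨ha0, hab.trans hbv⟩ ⟨ha0.trans_le hab, hbv⟩ hab
        · rw [hθz b hbv hb1, zero_mul, zero_div]
          rcases le_or_gt a vstar with hav | hav
          · exact hG0 a ha0 hav
          · rw [hθz a hav (hab.trans hb1), zero_mul, zero_div]
      rcases le_total u₂ v with hle | hle
      · rw [max_eq_right hle, max_eq_right (h12.trans hle)]
        exact key2 u₁ u₂ hm₁.1 h12 hle
      rcases le_total v u₁ with hle' | hle'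
      · rw [max_eq_left hle, max_eq_left hle']
        exact key3 u₁ u₂ hm₁.1 hle' h12 hm₂.2
      · rw [max_eq_left hle, max_eq_right hle']
        calc θ u₂ * φ u₂ * φ v / u₂ ≤ θ v * φ v * φ v / v :=
              key3 v u₂ hv0' le_rfl hle hm₂.2
          _ ≤ θ v * φ u₁ * φ v / u₁ := key2 u₁ v hm₁.1 hle' le_rfl
end

section
/- Let θ, φ : [0,1] → ℝ be continuously differentiable, with θ not identically zero, the zero set of φ consisting of at most isolated points, and such that C_{θ,φ} is a copula (conditions (a)–(d)). Let Ĉ(u,v) = u + v − 1 + C_{θ,φ}(1−u, 1−v) be the survival copula of C_{θ,φ}. Then Ĉ is totally positive of order 2, i.e. Ĉ(u₁,v₁)·Ĉ(u₂,v₂) − Ĉ(u₁,v₂)·Ĉ(u₂,v₁) ≥ 0 for all 0 ≤ u₁ ≤ u₂ ≤ 1 and 0 ≤ v₁ ≤ v₂ ≤ 1 (right corner set increasing), if and only if the map u ↦ (v − C_{θ,φ}(u,v))/(1−u) is non-increasing on [0,1) for every v ∈ [0,1] (right tail increasing). -/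
/-!
With `s = 1 - u`, `t = 1 - v` and `ψ x = φ x / (1 - x)`, the survival copula factors as
`Ĉ (1 - s) (1 - t) = (1 - s) (1 - t) (1 + g s t)` with `g s t = θ (max s t) ψ s ψ t`. So `Ĉ` is
TP2 iff the kernel `1 + g` is, while right tail increase says exactly that `g` is nondecreasing in
each variable; TP2 gives RTI by taking `v₂ = 1`.

For the converse write `g s t = ψ (min s t) * (θ ψ) (max s t)`. Monotonicity of `g`, together with
`g 0 t = 0` (a boundary condition of the copula), makes `ψ` and `θ ψ` nondecreasing below any point
where `g` does not vanish, after replacing `ψ` by `-ψ` if necessary. The 2-increasing inequality of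
`C_{θ,φ}` on squares `[x, y]²` forces `θ` to be nonincreasing on intervals where `φ` has no zero.
For each of the three relative orders of the points `s₁ ≤ s₂` and `t₁ ≤ t₂`, the 2×2 minor of
`1 + g` is then an explicit sum of nonnegative products.
-/

open Set Filter Topology

lemma le_of_sub_le_mul_sq {f : ℝ → ℝ} {K p q : ℝ} (hpq : p ≤ q)
    (h : ∀ x y, p ≤ x → x ≤ y → y ≤ q → f y - f x ≤ K * (y - x) ^ 2) : f q ≤ f p := by
  have hbound : ∀ n : ℕ, 0 < n → f q - f p ≤ K * (q - p) ^ 2 / n := by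
    intro n hn
    have hn' : (0 : ℝ) < n := Nat.cast_pos.2 hn
    set d := (q - p) / n with hd
    have hd0 : 0 ≤ d := div_nonneg (sub_nonneg.2 hpq) hn'.le
    have hnode : ∀ i : ℕ, i ≤ n → p ≤ p + i * d ∧ p + i * d ≤ q := by
      intro i hi
      have hnd : (n : ℝ) * d = q - p := by rw [hd]; field_simp
      have : (i : ℝ) * d ≤ n * d := by gcongr
      constructor <;> nlinarith
    calc f q - f p = ∑ i ∈ Finset.range n, (f (p + (i + 1 : ℕ) * d) - f (p + i * d)) := by
          rw [Finset.sum_range_sub (fun i : ℕ => f (p + i * d))]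
          simp only [hd, Nat.cast_zero, zero_mul, add_zero]
          congr 2
          field_simp
          ring
      _ ≤ ∑ _i ∈ Finset.range n, K * d ^ 2 := by
          refine Finset.sum_le_sum fun i hi => ?_
          have hi := Finset.mem_range.1 hi
          have hstep : p + i * d ≤ p + (i + 1 : ℕ) * d := by push_cast; nlinarith
          refine (h _ _ (hnode i hi.le).1 hstep (hnode (i + 1) hi).2).trans_eq ?_
          push_cast
          ring
      _ = K * (q - p) ^ 2 / n := by
          rw [Finset.sum_const, Finset.card_range, nsmul_eq_mul, hd]
          field_simp
  have hlim : Tendsto (fun n : ℕ => K * (q - p) ^ 2 / n) atTop (𝓝 0) :=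
    tendsto_const_div_atTop_nhds_zero_nat _
  have := ge_of_tendsto hlim (eventually_atTop.2 ⟨1, fun n hn => hbound n hn⟩)
  linarith

/-- `C_{θ,φ} u v = u * v + maxKernel θ φ u v`. -/
def maxKernel (θ φ : ℝ → ℝ) (s t : ℝ) : ℝ := θ (max s t) * φ s * φ t

section MaxKernel

variable {θ ψ : ℝ → ℝ}

lemma maxKernel_comm (θ ψ : ℝ → ℝ) (s t : ℝ) : maxKernel θ ψ s t = maxKernel θ ψ t s := by
  rw [maxKernel, maxKernel, max_comm]
  ring

lemma maxKernel_of_le {s t : ℝ} (h : s ≤ t) : maxKernel θ ψ s t = ψ s * (θ t * ψ t) := by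
  rw [maxKernel, max_eq_right h]
  ring

lemma maxKernel_of_ge {s t : ℝ} (h : t ≤ s) : maxKernel θ ψ s t = ψ t * (θ s * ψ s) := by
  rw [maxKernel_comm, maxKernel_of_le h]

lemma maxKernel_neg : maxKernel θ (-ψ) = maxKernel θ ψ := by
  funext s t
  simp only [maxKernel, Pi.neg_apply, mul_neg, neg_mul, neg_neg]

/-- Writing `maxKernel θ ψ s t = ψ (min s t) * (θ ψ) (max s t)`, these are the conditions on
`[0, m]` under which `1 + maxKernel θ ψ` is totally positive of order 2. -/
structure MaxKernelRegular (θ ψ : ℝ → ℝ) (m : ℝ) : Prop where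
  psi_zero : ψ 0 = 0
  monotoneOn_psi : MonotoneOn ψ (Icc 0 m)
  monotoneOn_mul : MonotoneOn (fun x => θ x * ψ x) (Icc 0 m)
  theta_le : ∀ ⦃p q⦄, p ∈ Icc 0 m → q ∈ Icc 0 m → p ≤ q → 0 < ψ p → θ q ≤ θ p

namespace MaxKernelRegular

variable {m : ℝ}

lemma psi_nonneg (h : MaxKernelRegular θ ψ m) {x : ℝ} (hx : x ∈ Icc 0 m) : 0 ≤ ψ x :=
  h.psi_zero ▸ h.monotoneOn_psi (left_mem_Icc.2 (hx.1.trans hx.2)) hx hx.1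

lemma theta_mul_psi_nonneg (h : MaxKernelRegular θ ψ m) {x : ℝ} (hx : x ∈ Icc 0 m) :
    0 ≤ θ x * ψ x := by
  simpa [h.psi_zero] using h.monotoneOn_mul (left_mem_Icc.2 (hx.1.trans hx.2)) hx hx.1

lemma theta_nonneg (h : MaxKernelRegular θ ψ m) {x : ℝ} (hx : x ∈ Icc 0 m) (hψ : 0 < ψ x) :
    0 ≤ θ x :=
  nonneg_of_mul_nonneg_left (h.theta_mul_psi_nonneg hx) hψ

lemma psi_mul_theta_le (h : MaxKernelRegular θ ψ m) {x y : ℝ} (hx : x ∈ Icc 0 m)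
    (hy : y ∈ Icc 0 m) (hxy : x ≤ y) : ψ x * θ y ≤ θ y * ψ y := by
  rcases (h.psi_nonneg hx).eq_or_lt with hψx | hψx
  · rw [← hψx, zero_mul]
    exact h.theta_mul_psi_nonneg hy
  · have hψxy := h.monotoneOn_psi hx hy hxy
    rw [mul_comm]
    exact mul_le_mul_of_nonneg_left hψxy (h.theta_nonneg hy (hψx.trans_le hψxy))

lemma tp2_of_separated (h : MaxKernelRegular θ ψ m) {s₁ s₂ t₁ t₂ : ℝ} (hs₁ : 0 ≤ s₁)
    (hs : s₁ ≤ s₂) (hst : s₂ ≤ t₁) (ht : t₁ ≤ t₂) (ht₂ : t₂ ≤ m) :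
    (1 + maxKernel θ ψ s₁ t₂) * (1 + maxKernel θ ψ s₂ t₁) ≤
      (1 + maxKernel θ ψ s₁ t₁) * (1 + maxKernel θ ψ s₂ t₂) := by
  have key : (1 + maxKernel θ ψ s₁ t₁) * (1 + maxKernel θ ψ s₂ t₂) -
      (1 + maxKernel θ ψ s₁ t₂) * (1 + maxKernel θ ψ s₂ t₁) =
      (θ t₂ * ψ t₂ - θ t₁ * ψ t₁) * (ψ s₂ - ψ s₁) := by
    rw [maxKernel_of_le (hs.trans hst), maxKernel_of_le (hst.trans ht),
      maxKernel_of_le (hs.trans (hst.trans ht)), maxKernel_of_le hst]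
    ring
  rw [← sub_nonneg, key]
  refine mul_nonneg (sub_nonneg.2 ?_) (sub_nonneg.2 ?_)
  · exact h.monotoneOn_mul ⟨by linarith, by linarith⟩ ⟨by linarith, ht₂⟩ ht
  · exact h.monotoneOn_psi ⟨hs₁, by linarith⟩ ⟨by linarith, by linarith⟩ hs

lemma tp2_of_interlaced (h : MaxKernelRegular θ ψ m) {s₁ s₂ t₁ t₂ : ℝ} (hs₁ : 0 ≤ s₁)
    (hst₁ : s₁ ≤ t₁) (hts : t₁ ≤ s₂) (hst₂ : s₂ ≤ t₂) (ht₂ : t₂ ≤ m) :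
    (1 + maxKernel θ ψ s₁ t₂) * (1 + maxKernel θ ψ s₂ t₁) ≤
      (1 + maxKernel θ ψ s₁ t₁) * (1 + maxKernel θ ψ s₂ t₂) := by
  have mem_s₁ : s₁ ∈ Icc 0 m := ⟨hs₁, by linarith⟩
  have mem_t₁ : t₁ ∈ Icc 0 m := ⟨by linarith, by linarith⟩
  have mem_s₂ : s₂ ∈ Icc 0 m := ⟨by linarith, by linarith⟩
  have mem_t₂ : t₂ ∈ Icc 0 m := ⟨by linarith, ht₂⟩
  have key : (1 + maxKernel θ ψ s₁ t₁) * (1 + maxKernel θ ψ s₂ t₂) -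
      (1 + maxKernel θ ψ s₁ t₂) * (1 + maxKernel θ ψ s₂ t₁) =
      (ψ s₂ - ψ s₁) * (θ t₂ * ψ t₂ - θ t₁ * ψ t₁) +
        ψ t₁ * ψ s₂ * (θ t₁ - θ s₂) * (1 + ψ s₁ * ψ t₂ * θ t₂) := by
    rw [maxKernel_of_le hst₁, maxKernel_of_le hst₂, maxKernel_of_le (by linarith : s₁ ≤ t₂),
      maxKernel_of_ge hts]
    ring
  rw [← sub_nonneg, key]
  refine add_nonneg (mul_nonneg (sub_nonneg.2 ?_) (sub_nonneg.2 ?_)) ?_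
  · exact h.monotoneOn_psi mem_s₁ mem_s₂ (hst₁.trans hts)
  · exact h.monotoneOn_mul mem_t₁ mem_t₂ (hts.trans hst₂)
  rcases (h.psi_nonneg mem_t₁).eq_or_lt with hψt₁ | hψt₁
  · simp [← hψt₁]
  have hψt₂ : 0 < ψ t₂ := hψt₁.trans_le (h.monotoneOn_psi mem_t₁ mem_t₂ (hts.trans hst₂))
  refine mul_nonneg (mul_nonneg (mul_nonneg hψt₁.le (h.psi_nonneg mem_s₂))
    (sub_nonneg.2 (h.theta_le mem_t₁ mem_s₂ hts hψt₁))) ?_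
  exact add_nonneg zero_le_one (mul_nonneg (mul_nonneg (h.psi_nonneg mem_s₁)
    hψt₂.le) (h.theta_nonneg mem_t₂ hψt₂))

lemma tp2_of_nested (h : MaxKernelRegular θ ψ m) {s₁ s₂ t₁ t₂ : ℝ} (hs₁ : 0 ≤ s₁)
    (hst₁ : s₁ ≤ t₁) (ht : t₁ ≤ t₂) (hts : t₂ ≤ s₂) (hs₂ : s₂ ≤ m) :
    (1 + maxKernel θ ψ s₁ t₂) * (1 + maxKernel θ ψ s₂ t₁) ≤
      (1 + maxKernel θ ψ s₁ t₁) * (1 + maxKernel θ ψ s₂ t₂) := by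
  have mem_s₁ : s₁ ∈ Icc 0 m := ⟨hs₁, by linarith⟩
  have mem_t₁ : t₁ ∈ Icc 0 m := ⟨by linarith, by linarith⟩
  have mem_t₂ : t₂ ∈ Icc 0 m := ⟨by linarith, by linarith⟩
  have mem_s₂ : s₂ ∈ Icc 0 m := ⟨by linarith, hs₂⟩
  have key : (1 + maxKernel θ ψ s₁ t₁) * (1 + maxKernel θ ψ s₂ t₂) -
      (1 + maxKernel θ ψ s₁ t₂) * (1 + maxKernel θ ψ s₂ t₁) =
      (ψ t₂ - ψ t₁) * (θ s₂ * ψ s₂ - ψ s₁ * θ t₂) +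
        ψ s₁ * ψ t₁ * (θ t₁ - θ t₂) * (1 + ψ s₂ * ψ t₂ * θ s₂) := by
    rw [maxKernel_of_le hst₁, maxKernel_of_ge hts, maxKernel_of_le (hst₁.trans ht),
      maxKernel_of_ge (ht.trans hts)]
    ring
  rw [← sub_nonneg, key]
  refine add_nonneg (mul_nonneg (sub_nonneg.2 ?_) (sub_nonneg.2 ?_)) ?_
  · exact h.monotoneOn_psi mem_t₁ mem_t₂ ht
  · exact (h.psi_mul_theta_le mem_s₁ mem_t₂ (hst₁.trans ht)).trans
      (h.monotoneOn_mul mem_t₂ mem_s₂ hts)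
  rcases (h.psi_nonneg mem_t₁).eq_or_lt with hψt₁ | hψt₁
  · simp [← hψt₁]
  have hψs₂ : 0 < ψ s₂ := hψt₁.trans_le (h.monotoneOn_psi mem_t₁ mem_s₂ (ht.trans hts))
  refine mul_nonneg (mul_nonneg (mul_nonneg (h.psi_nonneg mem_s₁) hψt₁.le)
    (sub_nonneg.2 (h.theta_le mem_t₁ mem_t₂ ht hψt₁))) ?_
  exact add_nonneg zero_le_one (mul_nonneg (mul_nonneg hψs₂.le
    (h.psi_nonneg mem_t₂)) (h.theta_nonneg mem_s₂ hψs₂))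

lemma tp2 (h : MaxKernelRegular θ ψ m) {s₁ s₂ t₁ t₂ : ℝ} (hs₁ : 0 ≤ s₁) (hs : s₁ ≤ s₂)
    (hs₂ : s₂ ≤ m) (ht₁ : 0 ≤ t₁) (ht : t₁ ≤ t₂) (ht₂ : t₂ ≤ m) :
    (1 + maxKernel θ ψ s₁ t₂) * (1 + maxKernel θ ψ s₂ t₁) ≤
      (1 + maxKernel θ ψ s₁ t₁) * (1 + maxKernel θ ψ s₂ t₂) := by
  wlog hst₁ : s₁ ≤ t₁ generalizing s₁ s₂ t₁ t₂
  · have := this ht₁ ht ht₂ hs₁ hs hs₂ (le_of_not_ge hst₁)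
    rw [maxKernel_comm θ ψ t₁ s₂, maxKernel_comm θ ψ t₂ s₁, maxKernel_comm θ ψ t₁ s₁,
      maxKernel_comm θ ψ t₂ s₂, mul_comm (1 + _)] at this
    exact this
  rcases le_total s₂ t₁ with hst | hts
  · exact h.tp2_of_separated hs₁ hs hst ht ht₂
  rcases le_total s₂ t₂ with hst₂ | hts₂
  · exact h.tp2_of_interlaced hs₁ hst₁ hts hst₂ ht₂
  · exact h.tp2_of_nested hs₁ hst₁ ht hts₂ hs₂

lemma of_monotoneOn (hm : 0 ≤ m) (hzero : maxKernel θ ψ 0 m = 0)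
    (hmono : ∀ t ∈ Icc 0 m, MonotoneOn (fun s => maxKernel θ ψ s t) (Icc 0 m))
    (hanti : ∀ p q, 0 ≤ p → p ≤ q → q ≤ m → (∀ x ∈ Icc p q, ψ x ≠ 0) → θ q ≤ θ p)
    (hψm : 0 < ψ m) (hθm : 0 < θ m) : MaxKernelRegular θ ψ m := by
  have mem_m : m ∈ Icc 0 m := right_mem_Icc.2 hm
  have hkm : 0 < θ m * ψ m := mul_pos hθm hψm
  have psi_zero : ψ 0 = 0 := by
    rw [maxKernel_of_le hm] at hzero
    exact (mul_eq_zero.1 hzero).resolve_right hkm.ne'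
  have monotoneOn_psi : MonotoneOn ψ (Icc 0 m) := fun x hx y hy hxy => by
    have := hmono m mem_m hx hy hxy
    dsimp only at this
    rw [maxKernel_of_le hx.2, maxKernel_of_le hy.2] at this
    exact le_of_mul_le_mul_right this hkm
  have theta_le : ∀ ⦃p q⦄, p ∈ Icc 0 m → q ∈ Icc 0 m → p ≤ q → 0 < ψ p → θ q ≤ θ p :=
    fun p q hp hq hpq hψp => hanti p q hp.1 hpq hq.2 fun x hx =>
      (hψp.trans_le (monotoneOn_psi hp ⟨hp.1.trans hx.1, hx.2.trans hq.2⟩ hx.1)).ne'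
  refine ⟨psi_zero, monotoneOn_psi, fun x hx y hy hxy => ?_, theta_le⟩
  rcases (psi_zero ▸ monotoneOn_psi (left_mem_Icc.2 hm) hx hx.1).eq_or_lt with hψx | hψx
  · rcases (hψx.le.trans (monotoneOn_psi hx hy hxy)).eq_or_lt with hψy | hψy
    · simp only [← hψx, ← hψy, mul_zero, le_refl]
    · show θ x * ψ x ≤ θ y * ψ y
      rw [← hψx, mul_zero]
      exact mul_nonneg (hθm.le.trans (theta_le hy mem_m hy.2 hψy)) hψy.le
  · have := hmono x hx hx hy hxy
    dsimp only at this
    rw [maxKernel_of_le le_rfl, maxKernel_of_ge hxy] at this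
    exact le_of_mul_le_mul_left this hψx

end MaxKernelRegular

theorem one_add_maxKernel_tp2 {m : ℝ} (hm : 0 ≤ m)
    (hzero : ∀ t ∈ Icc 0 m, maxKernel θ ψ 0 t = 0)
    (hmono : ∀ t ∈ Icc 0 m, MonotoneOn (fun s => maxKernel θ ψ s t) (Icc 0 m))
    (hanti : ∀ p q, 0 ≤ p → p ≤ q → q ≤ m → (∀ x ∈ Icc p q, ψ x ≠ 0) → θ q ≤ θ p)
    {s₁ s₂ t₁ t₂ : ℝ} (hs₁ : 0 ≤ s₁) (hs : s₁ ≤ s₂) (hs₂ : s₂ ≤ m) (ht₁ : 0 ≤ t₁)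
    (ht : t₁ ≤ t₂) (ht₂ : t₂ ≤ m) :
    (1 + maxKernel θ ψ s₁ t₂) * (1 + maxKernel θ ψ s₂ t₁) ≤
      (1 + maxKernel θ ψ s₁ t₁) * (1 + maxKernel θ ψ s₂ t₂) := by
  have mem_m : m ∈ Icc 0 m := right_mem_Icc.2 hm
  have hbound : ∀ s ∈ Icc 0 m, ∀ t ∈ Icc 0 m,
      0 ≤ maxKernel θ ψ s t ∧ maxKernel θ ψ s t ≤ maxKernel θ ψ m m := by
    intro s hs t ht
    refine ⟨hzero t ht ▸ hmono t ht (left_mem_Icc.2 hm) hs hs.1,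
      (hmono t ht hs mem_m hs.2).trans ?_⟩
    show maxKernel θ ψ m t ≤ _
    rw [maxKernel_comm θ ψ m t]
    exact hmono m mem_m ht mem_m ht.2
  rcases (hbound m mem_m m mem_m).1.eq_or_lt with hdeg | hpos
  · have hvanish : ∀ s ∈ Icc 0 m, ∀ t ∈ Icc 0 m, maxKernel θ ψ s t = 0 := fun s hs t ht =>
      le_antisymm ((hbound s hs t ht).2.trans hdeg.ge) (hbound s hs t ht).1
    rw [hvanish s₁ ⟨hs₁, hs.trans hs₂⟩ t₂ ⟨ht₁.trans ht, ht₂⟩,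
      hvanish s₂ ⟨hs₁.trans hs, hs₂⟩ t₁ ⟨ht₁, ht.trans ht₂⟩,
      hvanish s₁ ⟨hs₁, hs.trans hs₂⟩ t₁ ⟨ht₁, ht.trans ht₂⟩,
      hvanish s₂ ⟨hs₁.trans hs, hs₂⟩ t₂ ⟨ht₁.trans ht, ht₂⟩]
  rw [maxKernel, max_self, mul_assoc] at hpos
  have hθm : 0 < θ m := pos_of_mul_pos_left hpos (mul_self_nonneg _)
  -- `maxKernel` is invariant under `ψ ↦ -ψ`, so the sign of `ψ m` may be chosen freely.
  rcases (mul_self_ne_zero.1 (right_ne_zero_of_mul hpos.ne')).lt_or_gt with hψm | hψm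
  · have h := MaxKernelRegular.of_monotoneOn (ψ := -ψ) hm
      (by rw [maxKernel_neg]; exact hzero m mem_m) (by rwa [maxKernel_neg])
      (fun p q hp hpq hq hne => hanti p q hp hpq hq fun x hx => by simpa using hne x hx)
      (by simpa using hψm) hθm
    simpa only [maxKernel_neg] using h.tp2 hs₁ hs hs₂ ht₁ ht ht₂
  · exact (MaxKernelRegular.of_monotoneOn hm (hzero m mem_m) hmono hanti hψm hθm).tp2
      hs₁ hs hs₂ ht₁ ht ht₂

end MaxKernel

namespace IsCopula

variable {C Chat : ℝ → ℝ → ℝ}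

lemma survival_zero_left (hC : IsCopula C)
    (hChat : ∀ u v, Chat u v = u + v - 1 + C (1 - u) (1 - v)) {v : ℝ} (hv : v ∈ Icc 0 1) :
    Chat 0 v = 0 := by
  rw [hChat, sub_zero, (hC.2.1 (1 - v) ⟨by linarith [hv.2], by linarith [hv.1]⟩).2]
  ring

lemma survival_zero_right (hC : IsCopula C)
    (hChat : ∀ u v, Chat u v = u + v - 1 + C (1 - u) (1 - v)) {u : ℝ} (hu : u ∈ Icc 0 1) :
    Chat u 0 = 0 := by
  rw [hChat, sub_zero, (hC.2.1 (1 - u) ⟨by linarith [hu.2], by linarith [hu.1]⟩).1]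
  ring

lemma survival_one_right (hC : IsCopula C)
    (hChat : ∀ u v, Chat u v = u + v - 1 + C (1 - u) (1 - v)) {u : ℝ} (hu : u ∈ Icc 0 1) :
    Chat u 1 = u := by
  rw [hChat, sub_self, (hC.1 (1 - u) ⟨by linarith [hu.2], by linarith [hu.1]⟩).1]
  ring

lemma antitoneOn_of_tp2 (hC : IsCopula C)
    (hChat : ∀ u v, Chat u v = u + v - 1 + C (1 - u) (1 - v))
    (hTP2 : ∀ u₁ u₂ v₁ v₂ : ℝ, 0 ≤ u₁ → u₁ ≤ u₂ → u₂ ≤ 1 → 0 ≤ v₁ → v₁ ≤ v₂ → v₂ ≤ 1 →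
      Chat u₁ v₁ * Chat u₂ v₂ - Chat u₁ v₂ * Chat u₂ v₁ ≥ 0) :
    ∀ v ∈ Icc (0:ℝ) 1, AntitoneOn (fun u => (v - C u v) / (1 - u)) (Ico 0 1) := by
  intro v hv a ha b hb hab
  have h := hTP2 (1 - b) (1 - a) (1 - v) 1 (by linarith [hb.2]) (by linarith) (by linarith [ha.1])
    (by linarith [hv.2]) (by linarith [hv.1]) le_rfl
  have mem_a : 1 - a ∈ Icc (0:ℝ) 1 := ⟨by linarith [ha.2], by linarith [ha.1]⟩
  have mem_b : 1 - b ∈ Icc (0:ℝ) 1 := ⟨by linarith [hb.2], by linarith [hb.1]⟩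
  rw [hC.survival_one_right hChat mem_a, hC.survival_one_right hChat mem_b, hChat (1 - b),
    hChat (1 - a), sub_sub_cancel, sub_sub_cancel, sub_sub_cancel] at h
  dsimp only
  rw [div_le_div_iff₀ (sub_pos.2 hb.2) (sub_pos.2 ha.2)]
  linear_combination h

end IsCopula

section Family

variable {θ φ : ℝ → ℝ}

lemma maxKernel_zero_left (hC : IsCopula (fun u v => u * v + maxKernel θ φ u v)) {t : ℝ}
    (ht : t ∈ Icc 0 1) : maxKernel θ φ 0 t = 0 := by
  simpa using (hC.1 t ht).2

lemma maxKernel_div_one_sub {s t : ℝ} (hs : s ≠ 1) (ht : t ≠ 1) :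
    maxKernel θ (fun x => φ x / (1 - x)) s t = maxKernel θ φ s t / ((1 - s) * (1 - t)) := by
  simp only [maxKernel]
  field_simp

lemma maxKernel_div_one_sub_zero_left (hC : IsCopula (fun u v => u * v + maxKernel θ φ u v))
    {t : ℝ} (ht : t ∈ Ico 0 1) : maxKernel θ (fun x => φ x / (1 - x)) 0 t = 0 := by
  rw [maxKernel_div_one_sub zero_ne_one ht.2.ne, maxKernel_zero_left hC (Ico_subset_Icc_self ht),
    zero_div]

lemma survival_eq_mul {Chat : ℝ → ℝ → ℝ} (hChat : ∀ u v : ℝ,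
      Chat u v = u + v - 1 + ((1 - u) * (1 - v) + maxKernel θ φ (1 - u) (1 - v)))
    {u v : ℝ} (hu : 0 < u) (hv : 0 < v) :
    Chat u v = u * v * (1 + maxKernel θ (fun x => φ x / (1 - x)) (1 - u) (1 - v)) := by
  rw [hChat, maxKernel_div_one_sub (by linarith) (by linarith), sub_sub_cancel, sub_sub_cancel]
  field_simp
  ring

lemma theta_sub_mul_sq_le (hC : IsCopula (fun u v => u * v + maxKernel θ φ u v)) {x y : ℝ}
    (hx : 0 ≤ x) (hxy : x ≤ y) (hy : y ≤ 1) :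
    (θ y - θ x) * φ x ^ 2 ≤ (y - x) ^ 2 + θ y * (φ y - φ x) ^ 2 := by
  have h := hC.2.2 x y x y hx hxy hy hx hxy hy
  simp only [maxKernel, max_self, max_eq_left hxy, max_eq_right hxy] at h
  linear_combination h

lemma theta_le_of_phi_ne_zero (hθ : ContinuousOn θ (Icc 0 1)) (hφ : ContDiffOn ℝ 1 φ (Icc 0 1))
    (hC : IsCopula (fun u v => u * v + maxKernel θ φ u v)) {p q : ℝ} (hp : 0 ≤ p) (hpq : p ≤ q)
    (hq : q ≤ 1) (hne : ∀ x ∈ Icc p q, φ x ≠ 0) : θ q ≤ θ p := by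
  -- Since `φ²` is bounded below on `[p, q]`, `theta_sub_mul_sq_le` gives `θ y - θ x = O((y - x)²)`.
  have hsub : Icc p q ⊆ Icc 0 1 := Icc_subset_Icc hp hq
  obtain ⟨M, hM⟩ := isCompact_Icc.exists_bound_of_continuousOn hθ
  have hM0 : 0 ≤ M := (norm_nonneg _).trans (hM 0 ⟨le_rfl, zero_le_one⟩)
  obtain ⟨L, hL⟩ := hφ.exists_lipschitzOnWith one_ne_zero (convex_Icc 0 1) isCompact_Icc
  obtain ⟨c, hc, hmin⟩ :=
    isCompact_Icc.exists_isMinOn (nonempty_Icc.2 hpq) ((hφ.continuousOn.mono hsub).pow 2)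
  have hμ : 0 < φ c ^ 2 := pow_two_pos_of_ne_zero (hne c hc)
  refine le_of_sub_le_mul_sq hpq (K := (1 + M * L ^ 2) / φ c ^ 2) fun x y hx hxy hy => ?_
  have hx' : x ∈ Icc 0 1 := hsub ⟨hx, hxy.trans hy⟩
  have hy' : y ∈ Icc 0 1 := hsub ⟨hx.trans hxy, hy⟩
  have hlip : (φ y - φ x) ^ 2 ≤ L ^ 2 * (y - x) ^ 2 := by
    have := hL.dist_le_mul y hy' x hx'
    rw [Real.dist_eq, Real.dist_eq] at this
    calc (φ y - φ x) ^ 2 = |φ y - φ x| ^ 2 := (sq_abs _).symm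
      _ ≤ (L * |y - x|) ^ 2 := by gcongr
      _ = L ^ 2 * (y - x) ^ 2 := by rw [mul_pow, sq_abs]
  have hθy : θ y * (φ y - φ x) ^ 2 ≤ M * (L ^ 2 * (y - x) ^ 2) :=
    mul_le_mul ((le_abs_self _).trans (hM y hy')) hlip (sq_nonneg _) hM0
  have hsq := theta_sub_mul_sq_le hC hx'.1 hxy hy'.2
  rw [div_mul_eq_mul_div, le_div_iff₀ hμ]
  rcases le_total (θ y - θ x) 0 with hle | hge
  · exact (mul_nonpos_of_nonpos_of_nonneg hle hμ.le).trans
      (mul_nonneg (add_nonneg zero_le_one (mul_nonneg hM0 (sq_nonneg _))) (sq_nonneg _))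
  · calc (θ y - θ x) * φ c ^ 2 ≤ (θ y - θ x) * φ x ^ 2 :=
          mul_le_mul_of_nonneg_left (hmin ⟨hx, hxy.trans hy⟩) hge
      _ ≤ (1 + M * L ^ 2) * (y - x) ^ 2 := by linarith

lemma monotoneOn_maxKernel_of_antitoneOn
    (hRTI : ∀ v ∈ Icc (0:ℝ) 1,
      AntitoneOn (fun u => (v - (u * v + maxKernel θ φ u v)) / (1 - u)) (Ico 0 1))
    {t : ℝ} (ht : t ∈ Ico 0 1) :
    MonotoneOn (fun s => maxKernel θ (fun x => φ x / (1 - x)) s t) (Ico 0 1) := by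
  have hrti : ∀ s ∈ Ico (0:ℝ) 1, (t - (s * t + maxKernel θ φ s t)) / (1 - s) =
      t - (1 - t) * maxKernel θ (fun x => φ x / (1 - x)) s t := by
    intro s hs
    have : 1 - s ≠ 0 := (sub_pos.2 hs.2).ne'
    have : 1 - t ≠ 0 := (sub_pos.2 ht.2).ne'
    rw [maxKernel_div_one_sub hs.2.ne ht.2.ne]
    field_simp
    ring
  intro a ha b hb hab
  have h := hRTI t (Ico_subset_Icc_self ht) ha hb hab
  dsimp only at h ⊢
  rw [hrti a ha, hrti b hb] at h
  exact le_of_mul_le_mul_left (by linarith) (sub_pos.2 ht.2)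

lemma one_add_maxKernel_div_one_sub_tp2 (hθ : ContinuousOn θ (Icc 0 1))
    (hφ : ContDiffOn ℝ 1 φ (Icc 0 1)) (hC : IsCopula (fun u v => u * v + maxKernel θ φ u v))
    (hRTI : ∀ v ∈ Icc (0:ℝ) 1,
      AntitoneOn (fun u => (v - (u * v + maxKernel θ φ u v)) / (1 - u)) (Ico 0 1))
    {s₁ s₂ t₁ t₂ : ℝ} (hs₁ : 0 ≤ s₁) (hs : s₁ ≤ s₂) (hs₂ : s₂ < 1) (ht₁ : 0 ≤ t₁)
    (ht : t₁ ≤ t₂) (ht₂ : t₂ < 1) :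
    (1 + maxKernel θ (fun x => φ x / (1 - x)) s₁ t₂) *
        (1 + maxKernel θ (fun x => φ x / (1 - x)) s₂ t₁) ≤
      (1 + maxKernel θ (fun x => φ x / (1 - x)) s₁ t₁) *
        (1 + maxKernel θ (fun x => φ x / (1 - x)) s₂ t₂) := by
  have hm : max s₂ t₂ < 1 := max_lt hs₂ ht₂
  have hsub : Icc 0 (max s₂ t₂) ⊆ Ico 0 1 := Icc_subset_Ico_right hm
  refine one_add_maxKernel_tp2 ((hs₁.trans hs).trans (le_max_left _ _))
    (fun t ht => maxKernel_div_one_sub_zero_left hC (hsub ht))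
    (fun t ht => (monotoneOn_maxKernel_of_antitoneOn hRTI (hsub ht)).mono hsub)
    (fun p q hp hpq hq hne => theta_le_of_phi_ne_zero hθ hφ hC hp hpq (hq.trans hm.le)
      fun x hx h0 => hne x hx (by simp [h0]))
    hs₁ hs (le_max_left _ _) ht₁ ht (le_max_right _ _)

end Family

theorem stmt10_general (θ φ : ℝ → ℝ)
    (hθ : ContDiffOn ℝ 1 θ (Set.Icc 0 1))
    (hφ : ContDiffOn ℝ 1 φ (Set.Icc 0 1))
    (hC : IsCopula (fun u v => u * v + θ (max u v) * φ u * φ v))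
    (Chat : ℝ → ℝ → ℝ)
    (hChat : ∀ u v : ℝ, Chat u v =
      u + v - 1 + ((1 - u) * (1 - v) + θ (max (1 - u) (1 - v)) * φ (1 - u) * φ (1 - v))) :
    (∀ u₁ u₂ v₁ v₂ : ℝ, 0 ≤ u₁ → u₁ ≤ u₂ → u₂ ≤ 1 → 0 ≤ v₁ → v₁ ≤ v₂ → v₂ ≤ 1 →
        Chat u₁ v₁ * Chat u₂ v₂ - Chat u₁ v₂ * Chat u₂ v₁ ≥ 0) ↔
      (∀ v ∈ Set.Icc (0:ℝ) 1,
        AntitoneOn (fun u => (v - (u * v + θ (max u v) * φ u * φ v)) / (1 - u))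
          (Set.Ico 0 1)) := by
  refine ⟨hC.antitoneOn_of_tp2 hChat, fun hRTI u₁ u₂ v₁ v₂ hu₁ hu hu₂ hv₁ hv hv₂ => ?_⟩
  rcases hu₁.eq_or_lt with rfl | hu₁
  · simp [hC.survival_zero_left hChat ⟨hv₁, hv.trans hv₂⟩,
      hC.survival_zero_left hChat ⟨hv₁.trans hv, hv₂⟩]
  rcases hv₁.eq_or_lt with rfl | hv₁
  · simp [hC.survival_zero_right hChat ⟨hu₁.le, hu.trans hu₂⟩,
      hC.survival_zero_right hChat ⟨hu₁.le.trans hu, hu₂⟩]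
  have hu₂' : 0 < u₂ := hu₁.trans_le hu
  have hv₂' : 0 < v₂ := hv₁.trans_le hv
  have key := one_add_maxKernel_div_one_sub_tp2 hθ.continuousOn hφ hC hRTI
    (s₁ := 1 - u₂) (s₂ := 1 - u₁) (t₁ := 1 - v₂) (t₂ := 1 - v₁)
    (by linarith) (by linarith) (by linarith) (by linarith) (by linarith) (by linarith)
  rw [survival_eq_mul hChat hu₁ hv₁, survival_eq_mul hChat hu₂' hv₂',
    survival_eq_mul hChat hu₁ hv₂', survival_eq_mul hChat hu₂' hv₁]
  have hP : 0 ≤ u₁ * u₂ * v₁ * v₂ := by positivity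
  linear_combination mul_nonneg hP (sub_nonneg.2 key)

theorem stmt10 (θ φ : ℝ → ℝ)
    (hθ : ContDiffOn ℝ 1 θ (Set.Icc 0 1))
    (hφ : ContDiffOn ℝ 1 φ (Set.Icc 0 1))
    (hθne : ∃ u ∈ Set.Icc (0:ℝ) 1, θ u ≠ 0)
    (hφiso : ∀ u ∈ Set.Icc (0:ℝ) 1, φ u = 0 →
      ∃ ε > 0, ∀ x ∈ Set.Icc (0:ℝ) 1, x ≠ u → |x - u| < ε → φ x ≠ 0)
    (hC : IsCopula (fun u v => u * v + θ (max u v) * φ u * φ v))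
    (Chat : ℝ → ℝ → ℝ)
    (hChat : ∀ u v : ℝ, Chat u v =
      u + v - 1 + ((1 - u) * (1 - v) + θ (max (1 - u) (1 - v)) * φ (1 - u) * φ (1 - v))) :
    (∀ u₁ u₂ v₁ v₂ : ℝ, 0 ≤ u₁ → u₁ ≤ u₂ → u₂ ≤ 1 → 0 ≤ v₁ → v₁ ≤ v₂ → v₂ ≤ 1 →
        Chat u₁ v₁ * Chat u₂ v₂ - Chat u₁ v₂ * Chat u₂ v₁ ≥ 0) ↔
      (∀ v ∈ Set.Icc (0:ℝ) 1,
        AntitoneOn (fun u => (v - (u * v + θ (max u v) * φ u * φ v)) / (1 - u))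
          (Set.Ico 0 1)) :=
  stmt10_general θ φ hθ hφ hC Chat hChat
end

section
/- Let K : [0,∞) → [0,1] be a cumulative distribution function with K(0) = 0, strictly increasing and differentiable on the open interval where 0 < K < 1, with K(T) = 1 for some finite T, and such that C(u,v) = u·v·(1 + K̄⁻¹(max(u,v))) is a copula, where K̄⁻¹(x) = inf{t ≥ 0 : K(t) ≥ 1 − x}. Then Spearman's Rho of C satisfies ρ = 12·∫₀¹∫₀¹ C(u,v) du dv − 3 = 3·∫₀^∞ (1 − K(t))⁴ dt. -/
/-! For `x ≥ 0`, `K̄⁻¹(x)` is the Lebesgue measure of `{t > 0 : x < K̄(t)}`. Hence, writing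
`φₜ(w) = w · 𝟙{0 < w < K̄(t)}`, we have `u v K̄⁻¹(max u v) = ∫₀^∞ φₜ(u) φₜ(v) dt`. Integrating over
`u` and `v` first (Fubini, twice) and using `∫₀¹ φₜ = K̄(t)² / 2` turns
`∫₀¹∫₀¹ u v K̄⁻¹(max u v) du dv` into `∫₀^∞ K̄(t)⁴ / 4 dt`, while `∫₀¹∫₀¹ u v du dv = 1/4`. -/

open MeasureTheory Set

/-- Generalized inverse of the survival function `K̄ = 1 - K` of a cdf `K` on `[0,∞)`:
`K̄⁻¹(x) = inf {t ≥ 0 : K(t) ≥ 1 - x}`. -/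
noncomputable def survInv (K : ℝ → ℝ) (x : ℝ) : ℝ :=
  sInf {t : ℝ | 0 ≤ t ∧ 1 - x ≤ K t}

section IndicatorIoo

variable {α : Type*} [MeasurableSpace α] {c : α → ℝ}

lemma measurable_indicator_Ioo_uncurry (hc : Measurable c) :
    Measurable fun p : ℝ × α => (Ioo 0 (c p.2)).indicator id p.1 := by
  have hS : MeasurableSet {p : ℝ × α | p.1 ∈ Ioo 0 (c p.2)} :=
    (measurableSet_lt measurable_const measurable_fst).inter
      (measurableSet_lt measurable_fst (hc.comp measurable_snd))
  convert measurable_fst.indicator hS using 1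
  ext p
  simp [indicator_apply]

lemma abs_indicator_Ioo_le (a w : ℝ) : |(Ioo 0 a).indicator id w| ≤ |a| := by
  by_cases h : w ∈ Ioo 0 a
  · rw [indicator_of_mem h, id, abs_of_pos h.1]
    exact h.2.le.trans (le_abs_self a)
  · rw [indicator_of_notMem h, abs_zero]
    exact abs_nonneg a

lemma integrable_indicator_Ioo_mul {μ : Measure ℝ} [IsFiniteMeasure μ] {ν : Measure α} [SFinite ν]
    (hc : Measurable c) (hci : Integrable c ν) {F : α → ℝ} {M : ℝ} (hF : Measurable F)
    (hFM : ∀ t, |F t| ≤ M) :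
    Integrable (fun p : ℝ × α => (Ioo 0 (c p.2)).indicator id p.1 * F p.2) (μ.prod ν) := by
  refine Integrable.mono' ((hci.abs.mul_const M).comp_snd μ) ?_ (ae_of_all _ fun p => ?_)
  · exact ((measurable_indicator_Ioo_uncurry hc).mul (hF.comp measurable_snd)).aestronglyMeasurable
  · rw [Real.norm_eq_abs, abs_mul]
    exact mul_le_mul (abs_indicator_Ioo_le _ _) (hFM _) (abs_nonneg _) (abs_nonneg _)

lemma setIntegral_Ioc_indicator_Ioo {a : ℝ} (ha : a ∈ Icc (0:ℝ) 1) :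
    ∫ w in Ioc 0 1, (Ioo 0 a).indicator id w = a ^ 2 / 2 := by
  rw [integral_indicator measurableSet_Ioo, Measure.restrict_restrict measurableSet_Ioo,
    inter_eq_left.mpr (Ioo_subset_Ioc_self.trans (Ioc_subset_Ioc_right ha.2)),
    ← integral_Ioc_eq_integral_Ioo, ← intervalIntegral.integral_of_le ha.1]
  simp [integral_id]

lemma setIntegral_Ioc_integral_indicator_Ioo_mul {ν : Measure α} [SFinite ν] (hc : Measurable c)
    (hci : Integrable c ν) (hc01 : ∀ t, c t ∈ Icc (0:ℝ) 1) {F : α → ℝ} {M : ℝ}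
    (hF : Measurable F) (hFM : ∀ t, |F t| ≤ M) :
    ∫ w in Ioc 0 1, ∫ t, (Ioo 0 (c t)).indicator id w * F t ∂ν = ∫ t, F t * (c t ^ 2 / 2) ∂ν := by
  rw [integral_integral_swap (integrable_indicator_Ioo_mul hc hci hF hFM)]
  refine integral_congr_ae (ae_of_all _ fun t => ?_)
  simp only
  rw [integral_mul_const, setIntegral_Ioc_indicator_Ioo (hc01 t), mul_comm]

lemma mul_mul_measureReal_setOf_max_lt {ν : Measure α} (hc : Measurable c) {u v : ℝ}
    (hu : 0 < u) (hv : 0 < v) :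
    u * v * ν.real {t | max u v < c t} =
      ∫ t, (Ioo 0 (c t)).indicator id v * (Ioo 0 (c t)).indicator id u ∂ν := by
  have hprod : ∀ t, (Ioo 0 (c t)).indicator id v * (Ioo 0 (c t)).indicator id u =
      {t | max u v < c t}.indicator (fun _ => u * v) t := by
    intro t
    simp only [indicator_apply, mem_Ioo, mem_ofPred_eq, max_lt_iff, hu, hv, true_and, id]
    split_ifs <;> simp_all [mul_comm]
  simp_rw [hprod]
  rw [integral_indicator_const _ (measurableSet_lt measurable_const hc), smul_eq_mul, mul_comm]

end IndicatorIoo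

theorem integral_integral_mul_one_add_measureReal {α : Type*} [MeasurableSpace α] {c : α → ℝ}
    {ν : Measure α} [SFinite ν] (hc : Measurable c) (hci : Integrable c ν)
    (hc01 : ∀ t, c t ∈ Icc (0:ℝ) 1) :
    ∫ u in (0:ℝ)..1, ∫ v in (0:ℝ)..1, u * v * (1 + ν.real {t | max u v < c t}) =
      1 / 4 + ∫ t, c t ^ 4 / 4 ∂ν := by
  set φ : ℝ → α → ℝ := fun w t => (Ioo 0 (c t)).indicator id w
  have hφ : ∀ w, Measurable (φ w) := fun w =>
    (measurable_indicator_Ioo_uncurry hc).comp measurable_prodMk_left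
  have hφ_le : ∀ w t, |φ w t| ≤ 1 := fun w t =>
    (abs_indicator_Ioo_le _ _).trans ((abs_of_nonneg (hc01 t).1).trans_le (hc01 t).2)
  have hψ : Measurable fun t => c t ^ 2 / 2 := (hc.pow_const 2).div_const 2
  have hψ_le : ∀ t, |c t ^ 2 / 2| ≤ 1 := fun t => by
    rw [abs_of_nonneg (by positivity)]
    obtain ⟨h0, h1⟩ := hc01 t
    nlinarith
  have hφψ : Integrable (fun w => ∫ t, φ w t * (c t ^ 2 / 2) ∂ν) (volume.restrict (Ioc 0 1)) :=
    (integrable_indicator_Ioo_mul hc hci hψ hψ_le).integral_prod_left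
  have inner : ∀ u ∈ Ioc (0:ℝ) 1, ∫ v in (0:ℝ)..1, u * v * (1 + ν.real {t | max u v < c t}) =
      u / 2 + ∫ t, φ u t * (c t ^ 2 / 2) ∂ν := by
    intro u hu
    rw [intervalIntegral.integral_of_le zero_le_one,
      setIntegral_congr_fun measurableSet_Ioc fun v hv => by
        rw [mul_one_add, mul_mul_measureReal_setOf_max_lt hc hu.1 hv.1],
      integral_add (continuous_const_mul u).integrableOn_Ioc
        (integrable_indicator_Ioo_mul hc hci (hφ u) (hφ_le u)).integral_prod_left,
      setIntegral_Ioc_integral_indicator_Ioo_mul hc hci hc01 (hφ u) (hφ_le u),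
      integral_const_mul, ← intervalIntegral.integral_of_le zero_le_one, integral_id]
    ring
  rw [intervalIntegral.integral_of_le zero_le_one, setIntegral_congr_fun measurableSet_Ioc inner,
    integral_add
      (show Continuous fun x : ℝ => x / 2 by fun_prop).integrableOn_Ioc hφψ,
    setIntegral_Ioc_integral_indicator_Ioo_mul hc hci hc01 hψ hψ_le,
    ← intervalIntegral.integral_of_le zero_le_one, intervalIntegral.integral_div, integral_id]
  congr 1
  · norm_num
  · exact integral_congr_ae (ae_of_all _ fun t => by ring)

lemma survInv_nonneg (K : ℝ → ℝ) (x : ℝ) : 0 ≤ survInv K x :=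
  Real.sInf_nonneg fun _ ht => ht.1

lemma volume_setOf_lt_inter_Ioi_eq_survInv {K : ℝ → ℝ} (hK : MonotoneOn K (Ici 0)) {x : ℝ}
    (hne : ∃ t, 0 ≤ t ∧ 1 - x ≤ K t) :
    volume ({t | K t < 1 - x} ∩ Ioi 0) = ENNReal.ofReal (survInv K x) := by
  have hbdd : BddBelow {t : ℝ | 0 ≤ t ∧ 1 - x ≤ K t} := ⟨0, fun t ht => ht.1⟩
  have hlower : Ioo 0 (survInv K x) ⊆ {t | K t < 1 - x} ∩ Ioi 0 := fun t ht =>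
    ⟨not_le.mp fun h => ht.2.not_ge (csInf_le hbdd ⟨ht.1.le, h⟩), ht.1⟩
  have hupper : {t | K t < 1 - x} ∩ Ioi 0 ⊆ Ioc 0 (survInv K x) := fun t ht =>
    ⟨ht.2, le_csInf hne fun s hs => not_lt.mp fun hst =>
      ht.1.not_ge (hs.2.trans (hK hs.1 (Ioi_subset_Ici_self ht.2) hst.le))⟩
  refine le_antisymm ?_ ?_
  · simpa using measure_mono (μ := volume) hupper
  · simpa using measure_mono (μ := volume) hlower

/-- `K̄ = 1 - K`, extended by `1` to `t < 0` so that it is antitone, hence measurable, on `ℝ`. -/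
noncomputable def survivalFun (K : ℝ → ℝ) (t : ℝ) : ℝ :=
  1 - K (max t 0)

section SurvivalFun

variable {K : ℝ → ℝ}

lemma survivalFun_of_nonneg {t : ℝ} (ht : 0 ≤ t) : survivalFun K t = 1 - K t := by
  rw [survivalFun, max_eq_left ht]

lemma antitone_survivalFun (hK : MonotoneOn K (Ici 0)) : Antitone (survivalFun K) :=
  fun a b hab =>
    sub_le_sub_left (hK (le_max_right a 0) (le_max_right b 0) (max_le_max_right 0 hab)) 1

lemma survivalFun_mem_Icc (hKrange : ∀ t : ℝ, 0 ≤ t → K t ∈ Icc (0:ℝ) 1) (t : ℝ) :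
    survivalFun K t ∈ Icc (0:ℝ) 1 := by
  obtain ⟨h0, h1⟩ := hKrange _ (le_max_right t 0)
  constructor <;> rw [survivalFun] <;> linarith

lemma survivalFun_eq_zero (hKrange : ∀ t : ℝ, 0 ≤ t → K t ∈ Icc (0:ℝ) 1)
    (hK : MonotoneOn K (Ici 0)) {T t : ℝ} (hT0 : 0 ≤ T) (hKT : K T = 1) (ht : T ≤ t) :
    survivalFun K t = 0 := by
  have hle := hK hT0 (le_max_right t 0) (ht.trans (le_max_left t 0))
  have hge := (hKrange _ (le_max_right t 0)).2
  rw [survivalFun]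
  linarith

lemma integrableOn_survivalFun (hKrange : ∀ t : ℝ, 0 ≤ t → K t ∈ Icc (0:ℝ) 1)
    (hK : MonotoneOn K (Ici 0)) {T : ℝ} (hT0 : 0 ≤ T) (hKT : K T = 1) :
    IntegrableOn (survivalFun K) (Ioi 0) := by
  have hIcc : IntegrableOn (survivalFun K) (Icc 0 T) :=
    ((antitone_survivalFun hK).antitoneOn _).integrableOn_isCompact isCompact_Icc
  have hIoi : IntegrableOn (survivalFun K) (Ioi T) :=
    integrableOn_zero.congr_fun
      (fun t ht => (survivalFun_eq_zero hKrange hK hT0 hKT (le_of_lt ht)).symm) measurableSet_Ioi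
  exact (hIcc.union hIoi).mono_set fun t ht =>
    (le_or_gt t T).imp (fun h => ⟨le_of_lt ht, h⟩) id

lemma survInv_eq_measureReal (hK : MonotoneOn K (Ici 0)) {T : ℝ} (hT0 : 0 ≤ T) (hKT : K T = 1)
    {x : ℝ} (hx : 0 ≤ x) :
    survInv K x = (volume.restrict (Ioi 0)).real {t | x < survivalFun K t} := by
  have hset : {t | x < survivalFun K t} ∩ Ioi 0 = {t | K t < 1 - x} ∩ Ioi 0 := by
    ext t
    simp only [mem_inter_iff, mem_ofPred_eq, mem_Ioi]
    exact and_congr_left fun ht => by rw [survivalFun_of_nonneg (le_of_lt ht), lt_sub_comm]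
  rw [measureReal_restrict_apply' measurableSet_Ioi, hset, measureReal_def,
    volume_setOf_lt_inter_Ioi_eq_survInv hK ⟨T, hT0, by linarith⟩,
    ENNReal.toReal_ofReal (survInv_nonneg K x)]

end SurvivalFun

theorem stmt13_general (K : ℝ → ℝ)
    (hKrange : ∀ t : ℝ, 0 ≤ t → K t ∈ Set.Icc (0:ℝ) 1)
    (hKmono : MonotoneOn K (Set.Ici 0))
    (hT : ∃ T : ℝ, 0 ≤ T ∧ K T = 1) :
    12 * (∫ u in (0:ℝ)..1, ∫ v in (0:ℝ)..1,
        u * v * (1 + survInv K (max u v))) - 3 =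
      3 * ∫ t in Set.Ioi (0:ℝ), (1 - K t) ^ 4 := by
  obtain ⟨T, hT0, hKT⟩ := hT
  have hintegrand : EqOn (fun u => ∫ v in (0:ℝ)..1, u * v * (1 + survInv K (max u v)))
      (fun u => ∫ v in (0:ℝ)..1,
        u * v * (1 + (volume.restrict (Ioi 0)).real {t | max u v < survivalFun K t}))
      (uIcc 0 1) := fun u hu => intervalIntegral.integral_congr fun v _ => by
    rw [uIcc_of_le zero_le_one] at hu
    simp only [survInv_eq_measureReal hKmono hT0 hKT (le_max_of_le_left hu.1)]
  rw [intervalIntegral.integral_congr hintegrand,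
    integral_integral_mul_one_add_measureReal (antitone_survivalFun hKmono).measurable
      (integrableOn_survivalFun hKrange hKmono hT0 hKT) (survivalFun_mem_Icc hKrange),
    integral_div, setIntegral_congr_fun (g := fun t => (1 - K t) ^ 4) measurableSet_Ioi
      fun t ht => by rw [survivalFun_of_nonneg (le_of_lt ht)]]
  ring

theorem stmt13 (K : ℝ → ℝ)
    (hK0 : K 0 = 0)
    (hKrange : ∀ t : ℝ, 0 ≤ t → K t ∈ Set.Icc (0:ℝ) 1)
    (hKmono : MonotoneOn K (Set.Ici 0))
    (hKstrict : StrictMonoOn K {t : ℝ | 0 ≤ t ∧ 0 < K t ∧ K t < 1})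
    (hKdiff : ∀ t : ℝ, 0 ≤ t → 0 < K t → K t < 1 → DifferentiableAt ℝ K t)
    (hT : ∃ T : ℝ, 0 ≤ T ∧ K T = 1)
    (hC : IsCopula (fun u v => u * v * (1 + survInv K (max u v)))) :
    12 * (∫ u in (0:ℝ)..1, ∫ v in (0:ℝ)..1,
        u * v * (1 + survInv K (max u v))) - 3 =
      3 * ∫ t in Set.Ioi (0:ℝ), (1 - K t) ^ 4 :=
  stmt13_general K hKrange hKmono hT
end
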